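/- arXiv:1507.07370 — 4 statements merged into one kernel-verified Lean document; each statement's English description precedes it below -/
import Mathlib

section
/- Let G_•/Γ be a nilmanifold of length d. Then the set poly(𝓕∅ → G_•/Γ) of polynomial maps, viewed as a subset of the product space (G/Γ)^{𝓕∅} with the product topology (i.e. the topology of pointwise convergence), is compact. -/
/-- Auxiliary definition of polynomial maps `𝓕∅ → G` with respect to a prefiltration
`G_•` (given as a sequence of subgroups of an ambient group), with recursion depth `n`:
at depth `0` the prefiltration must be trivial and the map constantly `1`; at depth
`n + 1` the map takes values in `G_0` and all its discrete derivatives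
`D_β f (α) = f(α)⁻¹ · f(α ∪ β)` (for `β` non-empty and `α` disjoint from `β`) agree with
maps that are polynomial of depth `n` with respect to the shifted prefiltration `G_{•+1}`. -/
def PolyAux {G : Type*} [Group G] : ℕ → (ℕ → Subgroup G) → (Finset ℕ → G) → Prop
  | 0, Gs, f => Gs 0 = ⊥ ∧ ∀ α : Finset ℕ, f α = 1
  | n + 1, Gs, f => (∀ α : Finset ℕ, f α ∈ Gs 0) ∧
      ∀ β : Finset ℕ, β.Nonempty →
        ∃ Df : Finset ℕ → G, PolyAux n (fun i => Gs (i + 1)) Df ∧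
          ∀ α : Finset ℕ, Disjoint α β → Df α = (f α)⁻¹ * f (α ∪ β)

/-- `f ∈ poly(𝓕∅ → G_•)`: `f` is polynomial with respect to the (terminating)
prefiltration `G_•`. -/
def IsPolySeq {G : Type*} [Group G] (Gs : ℕ → Subgroup G) (f : Finset ℕ → G) : Prop :=
  ∃ n : ℕ, PolyAux n Gs f

/-- `f ∈ poly(𝓕∅ → G_•/Γ)`: `f = π ∘ g` for some `g ∈ poly(𝓕∅ → G_•)`, where
`π : G → G/Γ` is the quotient map. -/
def IsPolyQuot {G : Type*} [Group G] (Gs : ℕ → Subgroup G) (Γ : Subgroup G)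
    (f : Finset ℕ → G ⧸ Γ) : Prop :=
  ∃ g : Finset ℕ → G, IsPolySeq Gs g ∧ ∀ α : Finset ℕ, f α = QuotientGroup.mk (g α)

/-!
Every polynomial map is an ordered product `g(α) = ∏_{β ⊆ α} c_β` with `c_β ∈ G_{|β|}`, and every
such product is polynomial: polynomial maps form a group (Lazard–Leibman), the finite stages of the
product are built from factors `α ↦ [n ∈ α] u(α)`, and polynomiality survives pointwise
eventually-constant limits.

Given a polynomial `g`, choose the coefficients one set `β` at a time, in a compact fundamental
domain `K_{|β|}` for `Γ ∩ G_{|β|}` in `G_{|β|}`, so that `∏_{β' ⊆ α} c_{β'} ∈ g(α) Γ`. This is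
possible because, once the coefficients below `β` are fixed, the quotient of `g` by their product
is a polynomial map with values in `Γ` on the proper subsets of `β`, hence with value in
`G_{|β|} Γ` at `β`. So `poly(𝓕∅ → G_•/Γ)` is the continuous image of the compact product
`∏_β K_{|β|}`. The fundamental domains exist because a discrete subgroup with compact quotient
forces local compactness.
-/

open scoped commutatorElement Pointwise

section Basic

variable {G : Type*} [Group G] {Gs : ℕ → Subgroup G}

theorem Antitone.eq_bot_of_le (hA : Antitone Gs) {d k : ℕ} (hd : Gs d = ⊥) (hk : d ≤ k) :
    Gs k = ⊥ :=
  le_bot_iff.1 (hd ▸ hA hk)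

theorem antitone_shift (hA : Antitone Gs) (k : ℕ) : Antitone fun i => Gs (i + k) :=
  fun _ _ h => hA (by omega)

theorem commutator_le_shift (hA : Antitone Gs) (hC : ∀ i j, ⁅Gs i, Gs j⁆ ≤ Gs (i + j)) (k : ℕ)
    (i j : ℕ) : ⁅Gs (i + k), Gs (j + k)⁆ ≤ Gs (i + j + k) :=
  (hC _ _).trans (hA (by omega))

theorem conj_mem_of_commutator_le (hC : ∀ i j, ⁅Gs i, Gs j⁆ ≤ Gs (i + j)) {k : ℕ} {x y : G}
    (hx : x ∈ Gs k) (hy : y ∈ Gs 0) : y * x * y⁻¹ ∈ Gs k := by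
  have h : ⁅y, x⁆ ∈ Gs (0 + k) := hC 0 k (Subgroup.commutator_mem_commutator hy hx)
  rw [zero_add] at h
  simpa [commutatorElement_def] using mul_mem h hx

theorem PolyAux.mem {n : ℕ} {f : Finset ℕ → G} (h : PolyAux n Gs f) (α : Finset ℕ) :
    f α ∈ Gs 0 := by
  cases n with
  | zero => exact h.2 α ▸ one_mem _
  | succ n => exact h.1 α

theorem PolyAux.eq_bot : ∀ {n : ℕ} {Gs : ℕ → Subgroup G} {f : Finset ℕ → G},
    PolyAux n Gs f → Gs n = ⊥
  | 0, _, _, h => h.1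
  | _ + 1, _, _, h => (h.2 {0} (Finset.singleton_nonempty 0)).choose_spec.1.eq_bot

theorem polyAux_one : ∀ {n : ℕ} {Gs : ℕ → Subgroup G}, Gs n = ⊥ → PolyAux n Gs 1
  | 0, _, h => ⟨h, fun _ => rfl⟩
  | _ + 1, _, h => ⟨fun _ => one_mem _, fun _ _ => ⟨1, polyAux_one h, fun _ _ => by simp⟩⟩

theorem PolyAux.of_eq_bot : ∀ {d n : ℕ} {Gs : ℕ → Subgroup G} {f : Finset ℕ → G},
    Antitone Gs → Gs d = ⊥ → PolyAux n Gs f → PolyAux d Gs f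
  | 0, _, _, _, _, hd, h => ⟨hd, fun α => by simpa [hd] using h.mem α⟩
  | _ + 1, 0, _, f, hA, hd, h => by
    have hf : f = 1 := funext h.2
    exact hf ▸ polyAux_one hd
  | _ + 1, _ + 1, _, _, hA, hd, h => ⟨h.1, fun β hβ =>
    let ⟨Df, hDf, hDfβ⟩ := h.2 β hβ
    ⟨Df, hDf.of_eq_bot (antitone_shift hA 1) hd, hDfβ⟩⟩

theorem IsPolySeq.mem {f : Finset ℕ → G} (hf : IsPolySeq Gs f) (α : Finset ℕ) : f α ∈ Gs 0 :=
  hf.choose_spec.mem α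

theorem isPolySeq_one {d : ℕ} (hd : Gs d = ⊥) : IsPolySeq Gs 1 := ⟨d, polyAux_one hd⟩

theorem isPolySeq_of_eq_bot (h0 : Gs 0 = ⊥) {f : Finset ℕ → G} (hf : ∀ α, f α ∈ Gs 0) :
    IsPolySeq Gs f :=
  ⟨0, h0, fun α => by simpa [h0] using hf α⟩

theorem IsPolySeq.exists_deriv (hA : Antitone Gs) {f : Finset ℕ → G} (hf : IsPolySeq Gs f)
    {β : Finset ℕ} (hβ : β.Nonempty) :
    ∃ Df, IsPolySeq (fun i => Gs (i + 1)) Df ∧ ∀ α, Disjoint α β → f (α ∪ β) = f α * Df α := by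
  obtain ⟨n, hn⟩ := hf
  cases n with
  | zero =>
    refine ⟨1, isPolySeq_one (d := 0) (hA.eq_bot_of_le hn.1 (Nat.zero_le 1)), fun α _ => ?_⟩
    simp [hn.2]
  | succ n =>
    obtain ⟨Df, hDf, hDfβ⟩ := hn.2 β hβ
    exact ⟨Df, ⟨n, hDf⟩, fun α hα => by rw [hDfβ α hα, mul_inv_cancel_left]⟩

theorem isPolySeq_of_deriv (hA : Antitone Gs) {d : ℕ} (hd : Gs d = ⊥) {f : Finset ℕ → G}
    (hmem : ∀ α, f α ∈ Gs 0)
    (hderiv : ∀ β : Finset ℕ, β.Nonempty → ∃ Df, IsPolySeq (fun i => Gs (i + 1)) Df ∧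
      ∀ α, Disjoint α β → f (α ∪ β) = f α * Df α) :
    IsPolySeq Gs f := by
  refine ⟨d + 1, hmem, fun β hβ => ?_⟩
  obtain ⟨Df, ⟨n, hDf⟩, hDfβ⟩ := hderiv β hβ
  exact ⟨Df, hDf.of_eq_bot (antitone_shift hA 1) (hA.eq_bot_of_le hd (by omega)),
    fun α hα => by rw [hDfβ α hα, inv_mul_cancel_left]⟩

theorem isPolySeq_const (hA : Antitone Gs) {d : ℕ} (hd : Gs d = ⊥) {x : G} (hx : x ∈ Gs 0) :
    IsPolySeq Gs fun _ => x :=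
  isPolySeq_of_deriv hA hd (fun _ => hx) fun _ _ =>
    ⟨1, isPolySeq_one (d := d) (hA.eq_bot_of_le hd (by omega)), fun _ _ => (mul_one x).symm⟩

theorem IsPolySeq.mono {Gs' : ℕ → Subgroup G} (hA' : Antitone Gs') {d : ℕ} (hd' : Gs' d = ⊥)
    (hle : ∀ i, Gs i ≤ Gs' i) {f : Finset ℕ → G} (hf : IsPolySeq Gs f) : IsPolySeq Gs' f := by
  obtain ⟨n, hn⟩ := hf
  induction n generalizing Gs Gs' d f with
  | zero => exact funext hn.2 ▸ isPolySeq_one hd'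
  | succ n ih =>
    refine isPolySeq_of_deriv hA' hd' (fun α => hle 0 (hn.1 α)) fun β hβ => ?_
    obtain ⟨Df, hDf, hDfβ⟩ := hn.2 β hβ
    exact ⟨Df, ih (antitone_shift hA' 1) (hA'.eq_bot_of_le hd' (Nat.le_succ d))
      (fun i => hle (i + 1)) hDf, fun α hα => by rw [hDfβ α hα, mul_inv_cancel_left]⟩

end Basic

section Structural

variable {G : Type*} [Group G] {Gs : ℕ → Subgroup G}

theorem PolyAux.comp_sdiff_union {s t : Finset ℕ} (hts : t ⊆ s) :
    ∀ {n : ℕ} {Gs : ℕ → Subgroup G} {f : Finset ℕ → G},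
    PolyAux n Gs f → PolyAux n Gs fun α => f (α \ s ∪ t)
  | 0, _, _, h => ⟨h.1, fun _ => h.2 _⟩
  | n + 1, _, f, h => by
    refine ⟨fun α => h.1 _, fun β hβ => ?_⟩
    by_cases hβs : (β \ s).Nonempty
    · obtain ⟨Df, hDf, hDfβ⟩ := h.2 _ hβs
      refine ⟨fun α => Df (α \ s ∪ t), hDf.comp_sdiff_union hts, fun α hα => ?_⟩
      have hdisj : Disjoint (α \ s ∪ t) (β \ s) := by
        rw [Finset.disjoint_left] at hα ⊢
        intro x hx hx'
        simp only [Finset.mem_union, Finset.mem_sdiff] at hx hx'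
        rcases hx with hx | hx
        · exact hα hx.1 hx'.1
        · exact hx'.2 (hts hx)
      have hunion : (α ∪ β) \ s ∪ t = (α \ s ∪ t) ∪ β \ s := by
        ext x; simp only [Finset.mem_union, Finset.mem_sdiff]; tauto
      show Df (α \ s ∪ t) = (f (α \ s ∪ t))⁻¹ * f ((α ∪ β) \ s ∪ t)
      rw [hunion, hDfβ _ hdisj]
    · refine ⟨1, polyAux_one (h.2 {0} (Finset.singleton_nonempty 0)).choose_spec.1.eq_bot,
        fun α _ => ?_⟩
      have hunion : (α ∪ β) \ s = α \ s := by
        rw [Finset.union_sdiff_distrib, Finset.not_nonempty_iff_eq_empty.1 hβs,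
          Finset.union_empty]
      simp [hunion]

theorem IsPolySeq.comp_sdiff_union {s t : Finset ℕ} (hts : t ⊆ s) {f : Finset ℕ → G}
    (hf : IsPolySeq Gs f) : IsPolySeq Gs fun α => f (α \ s ∪ t) :=
  let ⟨n, hn⟩ := hf
  ⟨n, hn.comp_sdiff_union hts⟩

/-- A choice of `D_β f` depending on only two values of `f` at each point, so that it passes to
pointwise limits. -/
theorem IsPolySeq.sdiff_inv_mul_union (hA : Antitone Gs) {f : Finset ℕ → G} (hf : IsPolySeq Gs f)
    {β : Finset ℕ} (hβ : β.Nonempty) :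
    IsPolySeq (fun i => Gs (i + 1)) fun α => (f (α \ β))⁻¹ * f (α ∪ β) := by
  obtain ⟨Df, hDf, hDfβ⟩ := hf.exists_deriv hA hβ
  convert hDf.comp_sdiff_union (Finset.empty_subset β) using 2 with α
  rw [Finset.union_empty, ← Finset.sdiff_union_self_eq_union,
    hDfβ _ Finset.sdiff_disjoint, inv_mul_cancel_left]

theorem isPolySeq_of_eventually_eq (hA : Antitone Gs) {d : ℕ} (hd : Gs d = ⊥) {ι : Type*}
    {l : Filter ι} [l.NeBot] {F : ι → Finset ℕ → G} (hF : ∀ i, IsPolySeq Gs (F i))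
    {f : Finset ℕ → G} (hlim : ∀ α, ∀ᶠ i in l, F i α = f α) : IsPolySeq Gs f := by
  induction d generalizing Gs F f with
  | zero =>
    refine isPolySeq_of_eq_bot hd fun α => ?_
    obtain ⟨i, hi⟩ := (hlim α).exists
    exact hi ▸ (hF i).mem α
  | succ d ih =>
    refine isPolySeq_of_deriv hA hd (fun α => ?_) fun β hβ =>
      ⟨fun α => (f (α \ β))⁻¹ * f (α ∪ β), ih (antitone_shift hA 1) hd
      (fun i => (hF i).sdiff_inv_mul_union hA hβ) fun α => ?_, fun α hα => ?_⟩
    · obtain ⟨i, hi⟩ := (hlim α).exists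
      exact hi ▸ (hF i).mem α
    · filter_upwards [hlim (α \ β), hlim (α ∪ β)] with i h₁ h₂
      rw [h₁, h₂]
    · simp only [Finset.sdiff_eq_self_of_disjoint hα, mul_inv_cancel_left]

theorem isPolySeq_ite_mem (hA : Antitone Gs) {d : ℕ} (hd : Gs d = ⊥) {n : ℕ}
    {u : Finset ℕ → G} (hu : IsPolySeq (fun i => Gs (i + 1)) u)
    (hins : ∀ α, u (insert n α) = u α) : IsPolySeq Gs fun α => if n ∈ α then u α else 1 := by
  have hmem : ∀ {Gs : ℕ → Subgroup G} {u : Finset ℕ → G}, Antitone Gs →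
      IsPolySeq (fun i => Gs (i + 1)) u → ∀ α, (if n ∈ α then u α else 1) ∈ Gs 0 := by
    intro Gs u hA hu α
    split_ifs
    exacts [hA (Nat.zero_le 1) (hu.mem α), one_mem _]
  induction d generalizing Gs u with
  | zero => exact isPolySeq_of_eq_bot hd (hmem hA hu)
  | succ d ih =>
    refine isPolySeq_of_deriv hA hd (hmem hA hu) fun β hβ => ?_
    by_cases hnβ : n ∈ β
    · refine ⟨_, hu.comp_sdiff_union (subset_refl β), fun α hα => ?_⟩
      have hnα : n ∉ α := Finset.disjoint_right.1 hα hnβ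
      simp [hnα, hnβ, Finset.sdiff_union_self_eq_union]
    · refine ⟨_, ih (antitone_shift hA 1) hd (hu.sdiff_inv_mul_union (antitone_shift hA 1) hβ)
        fun α => ?_, fun α hα => ?_⟩
      · rw [Finset.insert_sdiff_of_notMem _ hnβ, Finset.insert_union, hins, hins]
      · by_cases hnα : n ∈ α
        · simp [hnα, Finset.sdiff_eq_self_of_disjoint hα]
        · simp [hnα, hnβ]

end Structural

section LazardLeibman

variable {G : Type*} [Group G] {Gs : ℕ → Subgroup G}

theorem IsPolySeq.mem_shift {k : ℕ} {f : Finset ℕ → G} (hf : IsPolySeq (fun i => Gs (i + k)) f)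
    (α : Finset ℕ) : f α ∈ Gs k := by
  simpa using hf.mem α

theorem IsPolySeq.exists_deriv_shift (hA : Antitone Gs) {k : ℕ} {f : Finset ℕ → G}
    (hf : IsPolySeq (fun i => Gs (i + k)) f) {β : Finset ℕ} (hβ : β.Nonempty) :
    ∃ Df, IsPolySeq (fun i => Gs (i + (k + 1))) Df ∧
      ∀ α, Disjoint α β → f (α ∪ β) = f α * Df α := by
  have e : (fun i => Gs (i + 1 + k)) = fun i => Gs (i + (k + 1)) :=
    funext fun i => congrArg Gs (by omega)
  exact e ▸ hf.exists_deriv (antitone_shift hA k) hβ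

theorem isPolySeq_shift_of_deriv (hA : Antitone Gs) {d : ℕ} (hd : Gs d = ⊥) {k : ℕ}
    {f : Finset ℕ → G} (hmem : ∀ α, f α ∈ Gs k)
    (hderiv : ∀ β : Finset ℕ, β.Nonempty → ∃ Df, IsPolySeq (fun i => Gs (i + (k + 1))) Df ∧
      ∀ α, Disjoint α β → f (α ∪ β) = f α * Df α) :
    IsPolySeq (fun i => Gs (i + k)) f := by
  have e : (fun i => Gs (i + 1 + k)) = fun i => Gs (i + (k + 1)) :=
    funext fun i => congrArg Gs (by omega)
  exact isPolySeq_of_deriv (antitone_shift hA k) (hA.eq_bot_of_le hd (Nat.le_add_right d k))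
    (by simpa using hmem) (e ▸ hderiv)

theorem isPolySeq_shift_of_eq_bot {k : ℕ} (hk : Gs k = ⊥) {f : Finset ℕ → G}
    (hmem : ∀ α, f α ∈ Gs k) : IsPolySeq (fun i => Gs (i + k)) f :=
  isPolySeq_of_eq_bot (by simpa using hk) (by simpa using hmem)

theorem isPolySeq_shift_congr {j k : ℕ} (h : j = k) {f : Finset ℕ → G} :
    IsPolySeq (fun i => Gs (i + j)) f ↔ IsPolySeq (fun i => Gs (i + k)) f := by
  subst h; rfl

theorem IsPolySeq.mono_shift (hA : Antitone Gs) {d : ℕ} (hd : Gs d = ⊥) {i j : ℕ} (hij : i ≤ j)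
    {f : Finset ℕ → G} (hf : IsPolySeq (fun n => Gs (n + j)) f) :
    IsPolySeq (fun n => Gs (n + i)) f :=
  hf.mono (antitone_shift hA i) (hA.eq_bot_of_le hd (Nat.le_add_right d i)) fun _ => hA (by omega)

def ConjClosedFrom (Gs : ℕ → Subgroup G) (m : ℕ) : Prop :=
  ∀ b, 1 ≤ b → m ≤ b → ∀ g u : Finset ℕ → G, IsPolySeq Gs g →
    IsPolySeq (fun i => Gs (i + b)) u → IsPolySeq (fun i => Gs (i + b)) (g * u * g⁻¹)

def CommClosedFrom (Gs : ℕ → Subgroup G) (m : ℕ) : Prop :=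
  ∀ a b, 1 ≤ a → 1 ≤ b → m ≤ a + b → ∀ u v : Finset ℕ → G,
    IsPolySeq (fun i => Gs (i + a)) u → IsPolySeq (fun i => Gs (i + b)) v →
    IsPolySeq (fun i => Gs (i + (a + b))) ⁅u, v⁆

variable (hA : Antitone Gs) (hC : ∀ i j, ⁅Gs i, Gs j⁆ ≤ Gs (i + j)) {d : ℕ} (hd : Gs d = ⊥)
  (hinv : ∀ k, 1 ≤ k → ∀ f : Finset ℕ → G,
    IsPolySeq (fun i => Gs (i + k)) f → IsPolySeq (fun i => Gs (i + k)) f⁻¹)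
  (hmul : ∀ k, 1 ≤ k → ∀ f g : Finset ℕ → G, IsPolySeq (fun i => Gs (i + k)) f →
    IsPolySeq (fun i => Gs (i + k)) g → IsPolySeq (fun i => Gs (i + k)) (f * g))
include hA hC hd hinv hmul

theorem ConjClosedFrom.of_succ {m : ℕ} (hconj : ConjClosedFrom Gs (m + 1))
    (hcomm : CommClosedFrom Gs (m + 1)) : ConjClosedFrom Gs m := by
  intro b hb hmb g u hg hu
  refine isPolySeq_shift_of_deriv hA hd
    (fun α => conj_mem_of_commutator_le hC (hu.mem_shift α) (hg.mem α)) fun β hβ => ?_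
  obtain ⟨Dg, hDg, hgβ⟩ := hg.exists_deriv hA hβ
  obtain ⟨Du, hDu, huβ⟩ := hu.exists_deriv_shift hA hβ
  have h₁ : IsPolySeq (fun i => Gs (i + (b + 1))) ⁅Dg, u⁆ :=
    add_comm 1 b ▸ hcomm 1 b le_rfl hb (by omega) Dg u hDg hu
  have h₂ : IsPolySeq (fun i => Gs (i + (b + 1))) (u⁻¹ * ⁅Dg, u⁆ * u) := by
    simpa using hconj (b + 1) (by omega) (by omega) u⁻¹ _
      ((hinv b hb u hu).mono_shift hA hd (Nat.zero_le b)) h₁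
  have h₃ : IsPolySeq (fun i => Gs (i + (b + 1))) (Dg * Du * Dg⁻¹) :=
    hconj (b + 1) (by omega) (by omega) Dg Du (hDg.mono_shift hA hd (Nat.zero_le 1)) hDu
  -- `(g Dg) (u Du) (g Dg)⁻¹ = g u g⁻¹ · W`, each factor of `W` being one level up.
  refine ⟨g * (u⁻¹ * ⁅Dg, u⁆ * u * (Dg * Du * Dg⁻¹)) * g⁻¹,
    hconj (b + 1) (by omega) (by omega) g _ hg (hmul (b + 1) (by omega) _ _ h₂ h₃),
    fun α hα => ?_⟩
  simp only [Pi.mul_apply, Pi.inv_apply, commutatorElement_def, hgβ α hα, huβ α hα]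
  group

theorem CommClosedFrom.of_succ {m : ℕ} (hconj : ConjClosedFrom Gs (m + 1))
    (hcomm : CommClosedFrom Gs (m + 1)) : CommClosedFrom Gs m := by
  intro a b ha hb hmab u v hu hv
  refine isPolySeq_shift_of_deriv hA hd (fun α => hC a b
    (Subgroup.commutator_mem_commutator (hu.mem_shift α) (hv.mem_shift α))) fun β hβ => ?_
  obtain ⟨Du, hDu, huβ⟩ := hu.exists_deriv_shift hA hβ
  obtain ⟨Dv, hDv, hvβ⟩ := hv.exists_deriv_shift hA hβ
  have hu₀ := hu.mono_shift hA hd (Nat.zero_le a)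
  have hv₀ := hv.mono_shift hA hd (Nat.zero_le b)
  have hvinv₀ := (hinv b hb v hv).mono_shift hA hd (Nat.zero_le b)
  have hDv₀ := hDv.mono_shift hA hd (Nat.zero_le (b + 1))
  have hDvinv₀ := (hinv (b + 1) (by omega) Dv hDv).mono_shift hA hd (Nat.zero_le (b + 1))
  have conj₁ := hconj (a + b + 1) (by omega) (by omega)
  have conj₂ := hconj (a + b + 2) (by omega) (by omega)
  have t₁ : IsPolySeq (fun i => Gs (i + (a + b + 1)))
      (v * (u * (v⁻¹ * ⁅Du, v⁆ * v) * u⁻¹) * v⁻¹) := by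
    have h := (isPolySeq_shift_congr (k := a + b + 1) (by omega)).1
      (hcomm (a + 1) b (by omega) hb (by omega) Du v hDu hv)
    have h' := conj₁ _ _ hvinv₀ h
    rw [inv_inv] at h'
    exact conj₁ _ _ hv₀ (conj₁ _ _ hu₀ h')
  have t₂ : IsPolySeq (fun i => Gs (i + (a + b + 1)))
      (v * (⁅u, Dv⁆ * (Dv * (u * (Dv⁻¹ * ⁅Du, Dv⁆ * Dv) * u⁻¹) * Dv⁻¹)) * v⁻¹) := by
    have h := (isPolySeq_shift_congr (k := a + b + 2) (by omega)).1
      (hcomm (a + 1) (b + 1) (by omega) (by omega) (by omega) Du Dv hDu hDv)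
    have h' := conj₂ _ _ hDvinv₀ h
    rw [inv_inv] at h'
    have h'' := (conj₂ _ _ hDv₀ (conj₂ _ _ hu₀ h')).mono_shift hA hd (Nat.le_succ (a + b + 1))
    have hc := (isPolySeq_shift_congr (k := a + b + 1) (by omega)).1
      (hcomm a (b + 1) ha (by omega) (by omega) u Dv hu hDv)
    exact conj₁ _ _ hv₀ (hmul _ (by omega) _ _ hc h'')
  -- `⁅u Du, v Dv⁆ = ⁅u, v⁆ · t₁ · t₂`
  refine ⟨_, (isPolySeq_shift_congr (by omega)).1 (hmul _ (by omega) _ _ t₁ t₂), fun α hα => ?_⟩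
  simp only [Pi.mul_apply, Pi.inv_apply, commutatorElement_def, huβ α hα, hvβ α hα]
  group

theorem conjClosedFrom_one : ConjClosedFrom Gs 1 := by
  suffices key : ∀ n m, d ≤ m + n → ConjClosedFrom Gs m ∧ CommClosedFrom Gs m from
    (key d 1 (by omega)).1
  intro n
  induction n with
  | zero =>
    refine fun m hm => ⟨fun b _ hmb g u hg hu => ?_, fun a b _ _ hmab u v hu hv => ?_⟩
    · exact isPolySeq_shift_of_eq_bot (hA.eq_bot_of_le hd (by omega))
        fun α => conj_mem_of_commutator_le hC (hu.mem_shift α) (hg.mem α)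
    · exact isPolySeq_shift_of_eq_bot (hA.eq_bot_of_le hd (by omega)) fun α =>
        hC a b (Subgroup.commutator_mem_commutator (hu.mem_shift α) (hv.mem_shift α))
  | succ n ih =>
    intro m hm
    obtain ⟨hconj, hcomm⟩ := ih (m + 1) (by omega)
    exact ⟨hconj.of_succ hA hC hd hinv hmul hcomm, hcomm.of_succ hA hC hd hinv hmul hconj⟩

end LazardLeibman

section PolyGroup

variable {G : Type*} [Group G] {Gs : ℕ → Subgroup G}

theorem IsPolySeq.inv_of_conjClosedFrom (hA : Antitone Gs) {d : ℕ} (hd : Gs d = ⊥)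
    (hinv : ∀ f : Finset ℕ → G,
      IsPolySeq (fun i => Gs (i + 1)) f → IsPolySeq (fun i => Gs (i + 1)) f⁻¹)
    (hconj : ConjClosedFrom Gs 1) {f : Finset ℕ → G} (hf : IsPolySeq Gs f) :
    IsPolySeq Gs f⁻¹ := by
  refine isPolySeq_of_deriv hA hd (fun α => inv_mem (hf.mem α)) fun β hβ => ?_
  obtain ⟨Df, hDf, hfβ⟩ := hf.exists_deriv hA hβ
  refine ⟨f * Df⁻¹ * f⁻¹, hconj 1 le_rfl le_rfl f _ hf (hinv _ hDf), fun α hα => ?_⟩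
  simp only [Pi.mul_apply, Pi.inv_apply, hfβ α hα]
  group

theorem IsPolySeq.mul_of_conjClosedFrom (hA : Antitone Gs) {d : ℕ} (hd : Gs d = ⊥)
    (hmul : ∀ f g : Finset ℕ → G, IsPolySeq (fun i => Gs (i + 1)) f →
      IsPolySeq (fun i => Gs (i + 1)) g → IsPolySeq (fun i => Gs (i + 1)) (f * g))
    (hconj : ConjClosedFrom Gs 1) {f g : Finset ℕ → G} (hf : IsPolySeq Gs f)
    (hg : IsPolySeq Gs g) (hg' : IsPolySeq Gs g⁻¹) : IsPolySeq Gs (f * g) := by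
  refine isPolySeq_of_deriv hA hd (fun α => mul_mem (hf.mem α) (hg.mem α)) fun β hβ => ?_
  obtain ⟨Df, hDf, hfβ⟩ := hf.exists_deriv hA hβ
  obtain ⟨Dg, hDg, hgβ⟩ := hg.exists_deriv hA hβ
  have h := hconj 1 le_rfl le_rfl _ Df hg' hDf
  rw [inv_inv] at h
  refine ⟨g⁻¹ * Df * g * Dg, hmul _ _ h hDg, fun α hα => ?_⟩
  simp only [Pi.mul_apply, Pi.inv_apply, hfβ α hα, hgβ α hα]
  group

/-- Lazard–Leibman. By induction on the length: the shifted prefiltrations `G_{•+k}`, `k ≥ 1`, are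
shorter, which supplies the inverses and products at levels `≥ 1` needed by `conjClosedFrom_one`. -/
theorem isPolySeq_inv_and_mul : ∀ {d : ℕ} {Gs : ℕ → Subgroup G}, Antitone Gs →
    (∀ i j, ⁅Gs i, Gs j⁆ ≤ Gs (i + j)) → Gs d = ⊥ →
    (∀ f, IsPolySeq Gs f → IsPolySeq Gs f⁻¹) ∧
      ∀ f g, IsPolySeq Gs f → IsPolySeq Gs g → IsPolySeq Gs (f * g) := by
  intro d
  induction d using Nat.strong_induction_on with
  | _ d ih =>
  intro Gs hA hC hd
  rcases Nat.eq_zero_or_pos d with rfl | hd₀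
  · exact ⟨fun f hf => isPolySeq_of_eq_bot hd fun α => inv_mem (hf.mem α),
      fun f g hf hg => isPolySeq_of_eq_bot hd fun α => mul_mem (hf.mem α) (hg.mem α)⟩
  have hshift : ∀ k, 1 ≤ k → _ := fun k hk =>
    ih (d - k) (by omega) (antitone_shift hA k) (commutator_le_shift hA hC k)
      (hA.eq_bot_of_le hd (by omega) : Gs (d - k + k) = ⊥)
  have hconj := conjClosedFrom_one hA hC hd (fun k hk => (hshift k hk).1)
    (fun k hk => (hshift k hk).2)
  have hinv : ∀ f, IsPolySeq Gs f → IsPolySeq Gs f⁻¹ := fun f hf =>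
    hf.inv_of_conjClosedFrom hA hd (hshift 1 le_rfl).1 hconj
  exact ⟨hinv, fun f g hf hg =>
    hf.mul_of_conjClosedFrom hA hd (hshift 1 le_rfl).2 hconj hg (hinv g hg)⟩

theorem IsPolySeq.inv (hA : Antitone Gs) (hC : ∀ i j, ⁅Gs i, Gs j⁆ ≤ Gs (i + j)) {d : ℕ}
    (hd : Gs d = ⊥) {f : Finset ℕ → G} (hf : IsPolySeq Gs f) : IsPolySeq Gs f⁻¹ :=
  (isPolySeq_inv_and_mul hA hC hd).1 f hf

theorem IsPolySeq.mul (hA : Antitone Gs) (hC : ∀ i j, ⁅Gs i, Gs j⁆ ≤ Gs (i + j)) {d : ℕ}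
    (hd : Gs d = ⊥) {f g : Finset ℕ → G} (hf : IsPolySeq Gs f) (hg : IsPolySeq Gs g) :
    IsPolySeq Gs (f * g) :=
  (isPolySeq_inv_and_mul hA hC hd).2 f g hf hg

end PolyGroup

theorem Finset.insert_ssubset_insert_of_notMem {α : Type*} [DecidableEq α] {m : α}
    {s t : Finset α} (hm : m ∉ t) (h : s ⊂ t) : insert m s ⊂ insert m t := by
  refine Finset.ssubset_iff_subset_ne.2 ⟨Finset.insert_subset_insert m h.subset, fun heq => h.ne ?_⟩
  rw [← Finset.erase_insert fun h' => hm (h.subset h'), heq, Finset.erase_insert hm]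

section Vanishing

variable {G : Type*} [Group G] {Gs : ℕ → Subgroup G}

theorem IsPolySeq.mem_mul_of_forall_ssubset (hA : Antitone Gs)
    (hC : ∀ i j, ⁅Gs i, Gs j⁆ ≤ Gs (i + j)) {r : Finset ℕ → G} (hr : IsPolySeq Gs r)
    (H : Subgroup G) {β : Finset ℕ} (hβ : ∀ γ ⊂ β, r γ ∈ H) :
    r β ∈ (Gs β.card : Set G) * (H : Set G) := by
  induction β using Finset.induction_on generalizing Gs r with
  | empty => exact ⟨r ∅, hr.mem ∅, 1, one_mem H, mul_one _⟩
  | insert m β hm ih =>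
    obtain ⟨Dr, hDr, hrm⟩ := hr.exists_deriv hA (Finset.singleton_nonempty m)
    have hinsert : ∀ γ ⊆ β, Disjoint γ {m} ∧ γ ∪ {m} = insert m γ := fun γ hγ =>
      ⟨Finset.disjoint_singleton_right.2 fun h => hm (hγ h), Finset.union_singleton m γ⟩
    have hDrH : ∀ γ ⊂ β, Dr γ ∈ H := by
      intro γ hγ
      obtain ⟨hdisj, hunion⟩ := hinsert γ hγ.subset
      have hr₁ : r γ ∈ H := hβ γ (hγ.trans_subset (Finset.subset_insert m β))
      have hr₂ : r (insert m γ) ∈ H := hβ _ (Finset.insert_ssubset_insert_of_notMem hm hγ)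
      have hrγ := hrm γ hdisj
      rw [hunion] at hrγ
      simpa [hrγ] using mul_mem (inv_mem hr₁) hr₂
    obtain ⟨x, hx, h, hh, hxh⟩ := ih (antitone_shift hA 1) (commutator_le_shift hA hC 1) hDr hDrH
    obtain ⟨hdisj, hunion⟩ := hinsert β subset_rfl
    have hrβ : r β ∈ H := hβ β (Finset.ssubset_insert hm)
    refine ⟨r β * x * (r β)⁻¹, ?_, r β * h, mul_mem hrβ hh, ?_⟩
    · rw [Finset.card_insert_of_notMem hm]
      exact conj_mem_of_commutator_le hC hx (hr.mem β)
    · rw [← hunion, hrm β hdisj, ← hxh]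
      group

end Vanishing

section SubsetProd

variable {G : Type*} [Group G]

/-- `partialSubsetProd n c α = ∏ c β` over `β ⊆ α ∩ {0, …, n-1}`, where the factors are ordered
so that `β` comes before `β'` whenever `max (β ∆ β') ∈ β'` (binary order). -/
def partialSubsetProd : ℕ → (Finset ℕ → G) → Finset ℕ → G
  | 0, c, _ => c ∅
  | n + 1, c, α =>
    partialSubsetProd n c α * if n ∈ α then partialSubsetProd n (fun β => c (insert n β)) α else 1

theorem partialSubsetProd_succ_of_notMem {n : ℕ} (c : Finset ℕ → G) {α : Finset ℕ} (h : n ∉ α) :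
    partialSubsetProd (n + 1) c α = partialSubsetProd n c α := by
  simp [partialSubsetProd, h]

theorem partialSubsetProd_insert_of_le {m : ℕ} {α : Finset ℕ} :
    ∀ {n : ℕ} (c : Finset ℕ → G), n ≤ m →
      partialSubsetProd n c (insert m α) = partialSubsetProd n c α
  | 0, _, _ => rfl
  | n + 1, c, h => by
    have hn : n ∈ insert m α ↔ n ∈ α := by simp [Nat.ne_of_lt h]
    simp only [partialSubsetProd, hn, partialSubsetProd_insert_of_le _ (Nat.le_of_succ_le h)]

theorem partialSubsetProd_congr {α : Finset ℕ} :
    ∀ {n : ℕ} {c c' : Finset ℕ → G}, (∀ γ ⊆ α, c γ = c' γ) →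
      partialSubsetProd n c α = partialSubsetProd n c' α
  | 0, _, _, h => h ∅ (Finset.empty_subset α)
  | n + 1, _, _, h => by
    simp only [partialSubsetProd, partialSubsetProd_congr h]
    split_ifs with hn
    · rw [partialSubsetProd_congr fun γ hγ => h _ (Finset.insert_subset hn hγ)]
    · rfl

theorem partialSubsetProd_eq_of_le {n : ℕ} {α : Finset ℕ} (hα : α ⊆ Finset.range n)
    (c : Finset ℕ → G) {m : ℕ} (hnm : n ≤ m) :
    partialSubsetProd m c α = partialSubsetProd n c α := by
  induction m, hnm using Nat.le_induction with
  | base => rfl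
  | succ m hnm ih =>
    rw [partialSubsetProd_succ_of_notMem c fun h => (Finset.mem_range.1 (hα h)).not_ge hnm, ih]

theorem partialSubsetProd_eq_mul_self :
    ∀ {n : ℕ} {α : Finset ℕ}, α ⊆ Finset.range n → ∀ {c c' : Finset ℕ → G},
      (∀ γ ⊆ α, γ ≠ α → c' γ = c γ) → c' α = 1 →
      partialSubsetProd n c α = partialSubsetProd n c' α * c α
  | 0, α, hα, c, c', _, h₁ => by
    obtain rfl : α = ∅ := Finset.subset_empty.1 hα
    simp [partialSubsetProd, h₁]
  | n + 1, α, hα, c, c', hc, h₁ => by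
    by_cases hn : n ∈ α
    · set α₀ := α.erase n
      have hα₀ : α₀ ⊆ Finset.range n := by
        simpa [Finset.range_add_one] using Finset.erase_subset_erase n hα
      have hnγ : ∀ γ ⊆ α₀, n ∉ γ := fun γ hγ h => Finset.notMem_erase n α (hγ h)
      have hα₀α : α₀ ⊆ α := Finset.erase_subset n α
      have hins : insert n α₀ = α := Finset.insert_erase hn
      have h₀ : partialSubsetProd n c' α₀ = partialSubsetProd n c α₀ :=
        partialSubsetProd_congr fun γ hγ =>
          hc γ (hγ.trans hα₀α) fun h => hnγ γ hγ (h ▸ hn)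
      have h₂ := partialSubsetProd_eq_mul_self hα₀ (c := fun β => c (insert n β))
        (c' := fun β => c' (insert n β)) (fun γ hγ hne => hc _ (Finset.insert_subset hn
          (hγ.trans hα₀α)) fun h => hne (by rw [← Finset.erase_insert (hnγ γ hγ), h]))
        (by rw [hins, h₁])
      simp only [partialSubsetProd, if_pos hn]
      rw [← hins]
      simp only [partialSubsetProd_insert_of_le _ le_rfl]
      rw [h₀, h₂, mul_assoc]
    · have hα' : α ⊆ Finset.range n :=
        (Finset.subset_insert_iff_of_notMem hn).1 (Finset.range_add_one ▸ hα)
      rw [partialSubsetProd_succ_of_notMem c hn, partialSubsetProd_succ_of_notMem c' hn]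
      exact partialSubsetProd_eq_mul_self hα' hc h₁

theorem continuous_partialSubsetProd [TopologicalSpace G] [ContinuousMul G] (n : ℕ)
    (α : Finset ℕ) : Continuous fun c : Finset ℕ → G => partialSubsetProd n c α := by
  induction n with
  | zero => exact continuous_apply ∅
  | succ n ih =>
    refine ih.mul ?_
    split_ifs
    exacts [ih.comp (continuous_pi fun β => continuous_apply (insert n β)), continuous_const]

theorem isPolySeq_partialSubsetProd {Gs : ℕ → Subgroup G} (hA : Antitone Gs)
    (hC : ∀ i j, ⁅Gs i, Gs j⁆ ≤ Gs (i + j)) {d : ℕ} (hd : Gs d = ⊥) (n : ℕ) {c : Finset ℕ → G}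
    (hc : ∀ β ⊆ Finset.range n, c β ∈ Gs β.card) : IsPolySeq Gs (partialSubsetProd n c) := by
  induction n generalizing Gs c with
  | zero => exact isPolySeq_const hA hd (hc ∅ (Finset.empty_subset _))
  | succ n ih =>
    have hrange : Finset.range n ⊆ Finset.range (n + 1) := Finset.range_subset_range.2 n.le_succ
    have hlow := ih hA hC hd fun β hβ => hc β (hβ.trans hrange)
    have hhigh := ih (antitone_shift hA 1) (commutator_le_shift hA hC 1)
      (hA.eq_bot_of_le hd d.le_succ) (c := fun β => c (insert n β)) fun β hβ => by
        have hnβ : n ∉ β := fun h => Finset.notMem_range_self (hβ h)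
        simpa [Finset.card_insert_of_notMem hnβ] using hc _ (Finset.insert_subset
          (Finset.self_mem_range_succ n) (hβ.trans hrange))
    exact hlow.mul hA hC hd
      (isPolySeq_ite_mem hA hd hhigh fun α => partialSubsetProd_insert_of_le _ le_rfl)

theorem subset_range_sup_succ (α : Finset ℕ) : α ⊆ Finset.range (α.sup (· + 1)) :=
  fun _ hx => Finset.mem_range.2 (Finset.le_sup (f := (· + 1)) hx)

/-- The full ordered product `∏_{β ⊆ α} c β`. -/
def subsetProd (c : Finset ℕ → G) (α : Finset ℕ) : G :=
  partialSubsetProd (α.sup (· + 1)) c α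

theorem subsetProd_congr {α : Finset ℕ} {c c' : Finset ℕ → G} (h : ∀ γ ⊆ α, c γ = c' γ) :
    subsetProd c α = subsetProd c' α :=
  partialSubsetProd_congr h

theorem subsetProd_eq_mul_self {α : Finset ℕ} {c c' : Finset ℕ → G}
    (hc : ∀ γ ⊆ α, γ ≠ α → c' γ = c γ) (h₁ : c' α = 1) :
    subsetProd c α = subsetProd c' α * c α :=
  partialSubsetProd_eq_mul_self (subset_range_sup_succ α) hc h₁

theorem isPolySeq_subsetProd {Gs : ℕ → Subgroup G} (hA : Antitone Gs)
    (hC : ∀ i j, ⁅Gs i, Gs j⁆ ≤ Gs (i + j)) {d : ℕ} (hd : Gs d = ⊥) {c : Finset ℕ → G}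
    (hc : ∀ β, c β ∈ Gs β.card) : IsPolySeq Gs (subsetProd c) :=
  isPolySeq_of_eventually_eq hA hd (l := Filter.atTop)
    (fun n => isPolySeq_partialSubsetProd hA hC hd n fun β _ => hc β) fun α =>
    Filter.eventually_atTop.2 ⟨α.sup (· + 1), fun _ hn =>
      partialSubsetProd_eq_of_le (subset_range_sup_succ α) c hn⟩

end SubsetProd

theorem Finset.exists_forall_of_local_step {ι X : Type*} [DecidableEq ι] [Nonempty X]
    (P : (Finset ι → X) → Finset ι → Prop)
    (hloc : ∀ c c' β, (∀ γ ⊆ β, c γ = c' γ) → P c β → P c' β)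
    (hstep : ∀ c β, (∀ γ ⊂ β, P c γ) → ∃ x, P (Function.update c β x) β) :
    ∃ c, ∀ β, P c β := by
  classical
  let below (s : Finset ι) (c : ∀ t ⊂ s, X) : Finset ι → X := fun t =>
    if ht : t ⊂ s then c t ht else Classical.arbitrary X
  let c : Finset ι → X := Finset.strongInduction fun s rec =>
    if h : ∃ x, P (Function.update (below s rec) s x) s then h.choose else Classical.arbitrary X
  refine ⟨c, fun β => Finset.strongInduction (fun β ih => ?_) β⟩
  have hbelow : ∀ γ ⊂ β, P (below β fun t _ => c t) γ := fun γ hγ =>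
    hloc c _ γ (fun δ hδ => by simp [below, hδ.trans_ssubset hγ]) (ih γ hγ)
  have h := hstep _ β hbelow
  have hc : c β = h.choose := by
    change Finset.strongInduction _ β = _
    rw [Finset.strongInduction_eq, dif_pos h]
  refine hloc _ c β (fun γ hγ => ?_) h.choose_spec
  rcases hγ.eq_or_ssubset with rfl | hγ'
  · simp [hc]
  · simp [below, hγ', Function.update, hγ'.ne]

section Reduction

variable {G : Type*} [Group G] {Gs : ℕ → Subgroup G}

theorem IsPolySeq.exists_subsetProd_inv_mul_mem (hA : Antitone Gs)
    (hC : ∀ i j, ⁅Gs i, Gs j⁆ ≤ Gs (i + j)) {d : ℕ} (hd : Gs d = ⊥) (Γ : Subgroup G)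
    {K : ℕ → Set G} (hKsub : ∀ i, K i ⊆ Gs i) (hK : ∀ i, ∀ x ∈ Gs i, ∃ k ∈ K i, k⁻¹ * x ∈ Γ)
    {g : Finset ℕ → G} (hg : IsPolySeq Gs g) :
    ∃ c : Finset ℕ → G, ∀ β, c β ∈ K β.card ∧ (g β)⁻¹ * subsetProd c β ∈ Γ := by
  classical
  refine Finset.exists_forall_of_local_step _ (fun c c' β h hβ => ?_) fun c β hc => ?_
  · rw [← h β subset_rfl, ← subsetProd_congr h]
    exact hβ
  set c₀ : Finset ℕ → G := fun γ => if γ ⊂ β then c γ else 1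
  have hc₀ : ∀ γ, c₀ γ ∈ Gs γ.card := fun γ => by
    by_cases h : γ ⊂ β
    · simpa [c₀, h] using hKsub _ (hc γ h).1
    · simp [c₀, h]
  set r := (subsetProd c₀)⁻¹ * g
  have hr : IsPolySeq Gs r := ((isPolySeq_subsetProd hA hC hd hc₀).inv hA hC hd).mul hA hC hd hg
  have hrΓ : ∀ γ ⊂ β, r γ ∈ Γ := fun γ hγ => by
    have h : subsetProd c₀ γ = subsetProd c γ :=
      subsetProd_congr fun δ hδ => by simp [c₀, hδ.trans_ssubset hγ]
    simpa [r, h] using inv_mem (hc γ hγ).2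
  obtain ⟨x, hx, y, hy, hxy⟩ := hr.mem_mul_of_forall_ssubset hA hC Γ hrΓ
  obtain ⟨k, hk, hkx⟩ := hK β.card x hx
  refine ⟨k, by simpa using hk, ?_⟩
  rw [subsetProd_eq_mul_self (c' := c₀) (fun γ hγ hne => ?_) (by simp [c₀]),
    Function.update_self]
  · have hgβ : g β = subsetProd c₀ β * r β := by simp [r]
    rw [← hxy] at hgβ
    rw [hgβ]
    convert mul_mem (inv_mem hy) (inv_mem hkx) using 1
    group
  · simp [c₀, Finset.ssubset_iff_subset_ne.2 ⟨hγ, hne⟩, hne]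

theorem setOf_isPolyQuot_eq_image (hA : Antitone Gs) (hC : ∀ i j, ⁅Gs i, Gs j⁆ ≤ Gs (i + j))
    {d : ℕ} (hd : Gs d = ⊥) (Γ : Subgroup G) {K : ℕ → Set G} (hKsub : ∀ i, K i ⊆ Gs i)
    (hK : ∀ i, ∀ x ∈ Gs i, ∃ k ∈ K i, k⁻¹ * x ∈ Γ) :
    {f | IsPolyQuot Gs Γ f} =
      (fun c α => QuotientGroup.mk (subsetProd c α)) '' Set.univ.pi fun β => K β.card := by
  ext f
  constructor
  · rintro ⟨g, hg, hfg⟩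
    obtain ⟨c, hc⟩ := hg.exists_subsetProd_inv_mul_mem hA hC hd Γ hKsub hK
    refine ⟨c, fun β _ => (hc β).1, funext fun α => ?_⟩
    rw [hfg]
    exact (QuotientGroup.eq.2 (hc α).2).symm
  · rintro ⟨c, hc, rfl⟩
    exact ⟨subsetProd c, isPolySeq_subsetProd hA hC hd fun β => hKsub _ (hc β (Set.mem_univ β)),
      fun α => rfl⟩

end Reduction

theorem IsOpenMap.exists_isCompact_image_eq_univ {X Y : Type*} [TopologicalSpace X]
    [TopologicalSpace Y] [WeaklyLocallyCompactSpace X] [CompactSpace Y] {f : X → Y}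
    (hf : IsOpenMap f) (hsurj : Function.Surjective f) : ∃ K, IsCompact K ∧ f '' K = Set.univ := by
  choose K hK hKx using fun x : X => exists_compact_mem_nhds x
  obtain ⟨t, ht⟩ := isCompact_univ.elim_finite_subcover (fun x => f '' interior (K x))
    (fun x => hf _ isOpen_interior) fun y _ => by
      obtain ⟨x, rfl⟩ := hsurj y
      exact Set.mem_iUnion.2 ⟨x, Set.mem_image_of_mem f (mem_interior_iff_mem_nhds.2 (hKx x))⟩
  refine ⟨⋃ x ∈ t, K x, t.isCompact_biUnion fun x _ => hK x, Set.eq_univ_of_univ_subset ?_⟩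
  refine ht.trans (Set.iUnion₂_subset fun x hx => Set.image_mono ?_)
  exact interior_subset.trans (Set.subset_biUnion_of_mem (u := K) hx)

theorem QuotientGroup.closure_image_mk_subset {H : Type*} [Group H] [TopologicalSpace H]
    [IsTopologicalGroup H] (Λ : Subgroup H) {U V : Set H} (hV : IsOpen V) (hV₁ : 1 ∈ V)
    (hVU : V * V ⊆ U) : closure ((↑) '' V : Set (H ⧸ Λ)) ⊆ (↑) '' U := by
  intro q hq
  obtain ⟨y, rfl⟩ := QuotientGroup.mk_surjective q
  have hN : IsOpen ((↑) '' {z | y * z⁻¹ ∈ V} : Set (H ⧸ Λ)) :=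
    QuotientGroup.isOpenMap_coe _ (hV.preimage (by fun_prop))
  obtain ⟨_, ⟨z, hz, rfl⟩, v, hv, hvz⟩ :=
    mem_closure_iff.1 hq _ hN ⟨y, by simpa using hV₁, rfl⟩
  refine ⟨y * z⁻¹ * v, hVU (Set.mul_mem_mul hz hv), QuotientGroup.eq.2 ?_⟩
  simpa [mul_assoc] using QuotientGroup.eq.1 hvz

/-- The quotient map is a local homeomorphism, and a closed neighbourhood of the identity coset
inside a chart is compact and lifts homeomorphically. -/
theorem locallyCompactSpace_of_isDiscrete_of_compactSpace_quotient {H : Type*} [Group H]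
    [TopologicalSpace H] [IsTopologicalGroup H] (Λ : Subgroup H) (hΛ : IsDiscrete (Λ : Set H))
    [CompactSpace (H ⧸ Λ)] : LocallyCompactSpace H := by
  obtain ⟨e, he₁, hpe⟩ := (Λ.isQuotientCoveringMap hΛ).isCoveringMap.isLocalHomeomorph 1
  obtain ⟨V, hVo, hV₁, hVV⟩ := exists_open_nhds_one_mul_subset (e.open_source.mem_nhds he₁)
  have hC : closure ((↑) '' V : Set (H ⧸ Λ)) ⊆ e.target := by
    refine (QuotientGroup.closure_image_mk_subset Λ hVo hV₁ hVV).trans ?_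
    rw [← e.image_source_eq_target, ← hpe]
  refine (isClosed_closure.isCompact.image_of_continuousOn
    (e.continuousOn_symm.mono hC)).locallyCompactSpace_of_mem_nhds_of_group (x := 1) ?_
  refine Filter.mem_of_superset ((hVo.inter e.open_source).mem_nhds ⟨hV₁, he₁⟩) fun x hx =>
    ⟨e x, subset_closure ⟨x, hx.1, by rw [hpe]⟩, e.left_inv hx.2⟩

theorem Subgroup.exists_isCompact_forall_exists_inv_mul_mem {G : Type*} [Group G]
    [TopologicalSpace G] [IsTopologicalGroup G] (H Γ : Subgroup G) [DiscreteTopology Γ]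
    [CompactSpace (H ⧸ Γ.subgroupOf H)] :
    ∃ K ⊆ (H : Set G), IsCompact K ∧ ∀ x ∈ H, ∃ k ∈ K, k⁻¹ * x ∈ Γ := by
  have hΓ : IsDiscrete ((Γ.subgroupOf H : Subgroup H) : Set H) := by
    simpa [Subgroup.coe_subgroupOf] using (SetLike.isDiscrete_iff_discreteTopology.2 ‹_›).preimage
      continuous_subtype_val.continuousOn Subtype.val_injective
  have := locallyCompactSpace_of_isDiscrete_of_compactSpace_quotient _ hΓ
  obtain ⟨K, hK, himage⟩ := (QuotientGroup.isOpenMap_coe (N := Γ.subgroupOf H))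
    |>.exists_isCompact_image_eq_univ QuotientGroup.mk_surjective
  refine ⟨Subtype.val '' K, Set.image_subset_iff.2 fun k _ => k.2, hK.image continuous_subtype_val,
    fun x hx => ?_⟩
  obtain ⟨k, hk, hkx⟩ :=
    himage.symm ▸ Set.mem_univ (QuotientGroup.mk ⟨x, hx⟩ : H ⧸ Γ.subgroupOf H)
  exact ⟨k, Set.mem_image_of_mem _ hk,
    by simpa using Subgroup.mem_subgroupOf.1 (QuotientGroup.eq.1 hkx)⟩

variable {E : Type*} [NormedAddCommGroup E] [NormedSpace ℝ E] [FiniteDimensional ℝ E]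
  {G : Type*} [TopologicalSpace G] [ChartedSpace E G] [Group G] [IsTopologicalGroup G]
  [LieGroup (modelWithCornersSelf ℝ E) (⊤ : ℕ∞) G] [Group.IsNilpotent G]

theorem statement3_general
    (d : ℕ) (Gs : ℕ → Subgroup G)
    (hanti : Antitone Gs)
    (hcomm : ∀ i j, ⁅Gs i, Gs j⁆ ≤ Gs (i + j))
    (hlen : Gs (d + 1) = ⊥)
    (Γ : Subgroup G) [DiscreteTopology Γ]
    (hrat : ∀ i, CompactSpace (↥(Gs i) ⧸ Γ.subgroupOf (Gs i)))
    : IsCompact {f : Finset ℕ → G ⧸ Γ | IsPolyQuot Gs Γ f} := by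
  choose K hKsub hKc hK using fun i =>
    have := hrat i
    (Gs i).exists_isCompact_forall_exists_inv_mul_mem Γ
  rw [setOf_isPolyQuot_eq_image hanti hcomm hlen Γ hKsub hK]
  exact (isCompact_univ_pi fun β => hKc β.card).image
    (continuous_pi fun α => QuotientGroup.continuous_mk.comp (continuous_partialSubsetProd _ α))

/-- Let `G_•/Γ` be a nilmanifold of length `d`. Then the set
`poly(𝓕∅ → G_•/Γ)`, viewed as a subset of `(G/Γ)^{𝓕∅}` with the product (pointwise
convergence) topology, is compact. -/
theorem statement3
    (d : ℕ) (Gs : ℕ → Subgroup G)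
    (hanti : Antitone Gs) (hclosed : ∀ i, IsClosed (Gs i : Set G))
    (hcomm : ∀ i j, ⁅Gs i, Gs j⁆ ≤ Gs (i + j))
    (hfil0 : Gs 0 = ⊤) (hfil1 : Gs 1 = ⊤) (hlen : Gs (d + 1) = ⊥)
    (Γ : Subgroup G) [DiscreteTopology Γ] (hcocompact : CompactSpace (G ⧸ Γ))
    (hrat : ∀ i, CompactSpace (↥(Gs i) ⧸ Γ.subgroupOf (Gs i)))
    : IsCompact {f : Finset ℕ → G ⧸ Γ | IsPolyQuot Gs Γ f} :=
  statement3_general d Gs hanti hcomm hlen Γ hrat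
end

section
/- A map f̄ : 𝓕∅ → 𝕋^m is a polynomial of degree ≤ d if and only if there exist constants a_γ ∈ 𝕋^m, indexed by γ ∈ 𝓕∅ with |γ| ≤ d, such that f̄(α) = ∑_{γ ⊆ α, |γ| ≤ d} a_γ for every α ∈ 𝓕∅. -/
open Finset

/-- Polynomial maps of degree ≤ `d` from `𝓕∅` to an abelian group, defined recursively:
degree ≤ 0 means constant, and degree ≤ d+1 means all discrete derivatives
`Δ_β f (α) = f (α ∪ β) - f α` (for `β` non-empty, `α` disjoint from `β`)
agree with some polynomial of degree ≤ d. -/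
def PolyDeg {M : Type*} [AddCommGroup M] : ℕ → (Finset ℕ → M) → Prop
  | 0, f => ∀ α β : Finset ℕ, f α = f β
  | d + 1, f => ∀ β : Finset ℕ, β.Nonempty → ∃ g : Finset ℕ → M, PolyDeg d g ∧
      ∀ α : Finset ℕ, Disjoint α β → g α = f (α ∪ β) - f α


section Aux

variable {M : Type*} [AddCommGroup M]

/-- Möbius coefficient of `f` at `γ`. -/
def mob (f : Finset ℕ → M) (γ : Finset ℕ) : M :=
  ∑ δ ∈ γ.powerset, ((-1 : ℤ) ^ (γ.card + δ.card)) • f δ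

lemma mob_insert (f : Finset ℕ → M) {n : ℕ} {γ : Finset ℕ} (hn : n ∉ γ) :
    mob f (insert n γ) = mob (fun δ => f (insert n δ) - f δ) γ := by
  unfold mob
  rw [Finset.sum_powerset_insert hn, card_insert_of_notMem hn, ← Finset.sum_add_distrib]
  refine Finset.sum_congr rfl fun δ hδ => ?_
  have hnδ : n ∉ δ := fun h => hn (mem_powerset.mp hδ h)
  rw [card_insert_of_notMem hnδ]
  have h1 : (-1 : ℤ) ^ (γ.card + 1 + δ.card) = -(-1 : ℤ) ^ (γ.card + δ.card) := by
    ring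
  have h2 : (-1 : ℤ) ^ (γ.card + 1 + (δ.card + 1)) = (-1 : ℤ) ^ (γ.card + δ.card) := by
    ring
  rw [h1, h2, smul_sub, neg_smul]
  abel

lemma mob_inv (f : Finset ℕ → M) (α : Finset ℕ) :
    ∑ γ ∈ α.powerset, mob f γ = f α := by
  induction α using Finset.induction_on generalizing f with
  | empty => simp [mob]
  | @insert n s hn ih =>
    rw [Finset.sum_powerset_insert hn, ih f]
    have h : ∑ γ ∈ s.powerset, mob f (insert n γ) =
        ∑ γ ∈ s.powerset, mob (fun δ => f (insert n δ) - f δ) γ :=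
      Finset.sum_congr rfl fun γ hγ =>
        mob_insert f (fun h => hn (mem_powerset.mp hγ h))
    rw [h, ih (fun δ => f (insert n δ) - f δ)]
    abel

lemma mob_eq_zero {d : ℕ} {f : Finset ℕ → M} (hf : PolyDeg d f) :
    ∀ γ : Finset ℕ, d < γ.card → mob f γ = 0 := by
  induction d generalizing f with
  | zero =>
    intro γ hγ
    have hne : γ ≠ ∅ := by
      intro h; rw [h] at hγ; simp at hγ
    unfold mob
    have h : ∀ δ ∈ γ.powerset, ((-1 : ℤ) ^ (γ.card + δ.card)) • f δ =
        ((-1 : ℤ) ^ γ.card * (-1 : ℤ) ^ δ.card) • f ∅ := by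
      intro δ _
      rw [hf δ ∅, pow_add]
    rw [Finset.sum_congr rfl h, ← Finset.sum_smul, ← Finset.mul_sum,
      Finset.sum_powerset_neg_one_pow_card, if_neg hne, mul_zero, zero_smul]
  | succ d ih =>
    intro γ hγ
    have hne : γ.Nonempty := card_pos.mp (by omega)
    obtain ⟨n, hn⟩ := hne
    obtain ⟨g, hg, hgf⟩ := hf {n} (singleton_nonempty n)
    have hn' : n ∉ γ.erase n := notMem_erase n γ
    have hγeq : γ = insert n (γ.erase n) := (insert_erase hn).symm
    rw [hγeq, mob_insert f hn']
    have h : mob (fun δ => f (insert n δ) - f δ) (γ.erase n) = mob g (γ.erase n) := by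
      unfold mob
      refine Finset.sum_congr rfl fun δ hδ => ?_
      have hd : Disjoint δ {n} :=
        disjoint_singleton_right.mpr fun h => hn' (mem_powerset.mp hδ h)
      rw [hgf δ hd, union_comm, ← insert_eq]
    rw [h]
    exact ih hg (γ.erase n) (by rw [card_erase_of_mem hn]; omega)

lemma polyDeg_of_rep (d : ℕ) : ∀ f a : Finset ℕ → M,
    (∀ α : Finset ℕ, f α = ∑ γ ∈ α.powerset.filter (fun γ => γ.card ≤ d), a γ) →
    PolyDeg d f := by
  induction d with
  | zero =>
    intro f a hf α β
    have h : ∀ s : Finset ℕ, s.powerset.filter (fun γ => γ.card ≤ 0) = {∅} := by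
      intro s
      ext γ
      simp only [mem_filter, mem_powerset, Nat.le_zero, card_eq_zero, mem_singleton]
      exact ⟨fun h => h.2, fun h => ⟨h ▸ empty_subset s, h⟩⟩
    rw [hf α, hf β, h α, h β]
  | succ d ih =>
    intro f a hf β hβ
    set b : Finset ℕ → M := fun τ =>
      ∑ σ ∈ β.powerset.filter (fun σ => σ.Nonempty ∧ τ.card + σ.card ≤ d + 1), a (τ ∪ σ)
      with hb
    refine ⟨fun α => ∑ τ ∈ α.powerset.filter (fun τ => τ.card ≤ d), b τ,
      ih _ b (fun _ => rfl), ?_⟩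
    intro α hαβ
    beta_reduce
    -- extend the sum to the full powerset
    have hext : ∑ τ ∈ α.powerset.filter (fun τ => τ.card ≤ d), b τ =
        ∑ τ ∈ α.powerset, b τ := by
      refine Finset.sum_subset (filter_subset _ _) fun τ hτ hτ' => ?_
      have hcard : d < τ.card := by
        by_contra h
        exact hτ' (mem_filter.mpr ⟨hτ, by omega⟩)
      rw [hb]
      refine Finset.sum_eq_zero fun σ hσ => absurd (mem_filter.mp hσ).2 ?_
      rintro ⟨hne, hle⟩
      have := card_pos.mpr hne
      omega
    rw [hext]
    -- split f (α ∪ β)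
    have hsplit := Finset.sum_filter_add_sum_filter_not
      ((α ∪ β).powerset.filter (fun γ => γ.card ≤ d + 1)) (fun γ => γ ⊆ α) a
    have hfst : ((α ∪ β).powerset.filter (fun γ => γ.card ≤ d + 1)).filter (fun γ => γ ⊆ α)
        = α.powerset.filter (fun γ => γ.card ≤ d + 1) := by
      ext γ
      simp only [mem_filter, mem_powerset]
      constructor
      · rintro ⟨⟨-, h2⟩, h3⟩; exact ⟨h3, h2⟩
      · rintro ⟨h1, h2⟩; exact ⟨⟨h1.trans subset_union_left, h2⟩, h1⟩
    rw [hfst, ← hf α, ← hf (α ∪ β)] at hsplit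
    have hkey : ∑ τ ∈ α.powerset, b τ =
        ∑ γ ∈ ((α ∪ β).powerset.filter (fun γ => γ.card ≤ d + 1)).filter
          (fun γ => ¬ γ ⊆ α), a γ := by
      rw [hb, Finset.sum_sigma' α.powerset
        (fun τ => β.powerset.filter (fun σ => σ.Nonempty ∧ τ.card + σ.card ≤ d + 1))
        (fun τ σ => a (τ ∪ σ))]
      refine Finset.sum_nbij' (fun p : (_ : Finset ℕ) × Finset ℕ => p.1 ∪ p.2)
        (fun γ => ⟨γ ∩ α, γ ∩ β⟩) ?_ ?_ ?_ ?_ ?_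
      · rintro ⟨τ, σ⟩ hp
        simp only [mem_sigma, mem_powerset, mem_filter] at hp
        obtain ⟨hτ, hσ, hσne, hcard⟩ := hp
        have hdisj : Disjoint τ σ := hαβ.mono hτ hσ
        simp only [mem_filter, mem_powerset]
        refine ⟨⟨union_subset_union hτ hσ, by rw [card_union_of_disjoint hdisj]; omega⟩, ?_⟩
        intro hsub
        obtain ⟨x, hx⟩ := hσne
        exact (disjoint_right.mp hαβ (hσ hx)) (hsub (mem_union_right τ hx))
      · intro γ hγ
        simp only [mem_filter, mem_powerset] at hγ
        obtain ⟨⟨hsub, hcard⟩, hnsub⟩ := hγ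
        have hdec : γ ∩ α ∪ γ ∩ β = γ := by
          rw [← inter_union_distrib_left, inter_eq_left]
          exact hsub
        simp only [mem_sigma, mem_powerset, mem_filter]
        refine ⟨inter_subset_right, inter_subset_right, ?_, ?_⟩
        · obtain ⟨x, hx, hxα⟩ := not_subset.mp hnsub
          rcases mem_union.mp (hsub hx) with h | h
          · exact absurd h hxα
          · exact ⟨x, mem_inter.mpr ⟨hx, h⟩⟩
        · have hd : Disjoint (γ ∩ α) (γ ∩ β) :=
            hαβ.mono inter_subset_right inter_subset_right
          rw [← card_union_of_disjoint hd, hdec]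
          exact hcard
      · rintro ⟨τ, σ⟩ hp
        simp only [mem_sigma, mem_powerset, mem_filter] at hp
        obtain ⟨hτ, hσ, -, -⟩ := hp
        have h1 : (τ ∪ σ) ∩ α = τ := by
          rw [union_inter_distrib_right, inter_eq_left.mpr hτ,
            disjoint_iff_inter_eq_empty.mp (hαβ.symm.mono hσ le_rfl), union_empty]
        have h2 : (τ ∪ σ) ∩ β = σ := by
          rw [union_inter_distrib_right, inter_eq_left.mpr hσ,
            disjoint_iff_inter_eq_empty.mp (hαβ.mono hτ le_rfl), empty_union]
        simp only [h1, h2]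
      · intro γ hγ
        simp only [mem_filter, mem_powerset] at hγ
        simp only [← inter_union_distrib_left, inter_eq_left]
        exact hγ.1.1
      · rintro ⟨τ, σ⟩ _
        rfl
    rw [hkey, eq_sub_iff_add_eq, add_comm]
    exact hsplit

end Aux

/-- A map `f : 𝓕∅ → 𝕋^m` is a polynomial of degree ≤ `d` if and only if
there are constants `a_γ ∈ 𝕋^m` such that `f α = ∑_{γ ⊆ α, |γ| ≤ d} a_γ` for all `α`. -/
theorem statement4 (m d : ℕ) (f : Finset ℕ → (Fin m → AddCircle (1 : ℝ))) :
    PolyDeg d f ↔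
      ∃ a : Finset ℕ → (Fin m → AddCircle (1 : ℝ)),
        ∀ α : Finset ℕ, f α = ∑ γ ∈ α.powerset.filter (fun γ => γ.card ≤ d), a γ := by
  constructor
  · intro hf
    refine ⟨mob f, fun α => ?_⟩
    have hinv := mob_inv f α
    rw [← Finset.sum_filter_add_sum_filter_not α.powerset (fun γ => γ.card ≤ d)
      (mob f)] at hinv
    have hz : ∑ γ ∈ α.powerset.filter (fun γ => ¬ γ.card ≤ d), mob f γ = 0 :=
      Finset.sum_eq_zero fun γ hγ =>
        mob_eq_zero hf γ (Nat.lt_of_not_le (mem_filter.mp hγ).2)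
    rw [hz, add_zero] at hinv
    exact hinv.symm
  · rintro ⟨a, ha⟩
    exact polyDeg_of_rep d f a ha
end

section
/- Let G_• be a filtration of length d on a nilpotent finite-dimensional real Lie group G, and let Γ ≤ G be a discrete subgroup with G/Γ compact such that G_• is Γ-rational. Then a map f : 𝓕∅ → G is polynomial with respect to G_• if and only if for every k ≥ 1 and every parallelepiped (α_ω)_{ω ∈ {0,1}^k} in 𝓕∅, the cube (f(α_ω))_{ω ∈ {0,1}^k} belongs to the Host–Kra cube group HK^k(G_•). -/
/-- The number of coordinates of `ω ∈ {0,1}^k` equal to `1`. -/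
def cubeWeight {k : ℕ} (ω : Fin k → Bool) : ℕ :=
  (Finset.univ.filter fun i => ω i = true).card

/-- The Host–Kra cube group `HK^k(G_•)`: the subgroup of `G^{{0,1}^k}` generated by the
upper-face elements `g^{[ω]}` (equal to `g` on `{σ : σ ≥ ω}` and `1` elsewhere) with
`g ∈ G_{|ω|}`. -/
def HKGroup {G : Type*} [Group G] (k : ℕ) (Gs : ℕ → Subgroup G) :
    Subgroup ((Fin k → Bool) → G) :=
  Subgroup.closure {x | ∃ (ω : Fin k → Bool) (g : G), g ∈ Gs (cubeWeight ω) ∧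
    x = fun σ => if ∀ i, ω i ≤ σ i then g else 1}

/-- Parallelepipeds in `𝓕∅`: families `(α_ω)_{ω ∈ {0,1}^k}` with
`α_ω = α_0 ∪ ⋃_{i : ω_i = 1} α_i` for pairwise disjoint finite sets `α_0, α_1, …, α_k`. -/
def IsParallelepiped (k : ℕ) (A : (Fin k → Bool) → Finset ℕ) : Prop :=
  ∃ (a : Finset ℕ) (b : Fin k → Finset ℕ),
    (∀ i, Disjoint a (b i)) ∧ (Pairwise fun i j => Disjoint (b i) (b j)) ∧
    ∀ ω : Fin k → Bool, A ω = a ∪ (Finset.univ.filter fun i => ω i = true).biUnion b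

/-!
A cube `c : {0,1}^{k+1} → G` lies in `HK^{k+1}(G_•)` iff its lower face `c(0,·)` lies in
`HK^k(G_•)` and its derivative `c(0,·)⁻¹ c(1,·)` lies in `HK^k(G_{•+1})`; the "only if" rests
on `HK^k(G_•)` normalizing `HK^k(G_{•+1})`, which follows from `[G_i, G_j] ⊆ G_{i+j}` on
generators. For the cube of `f` over the parallelepiped with sides `α_0, β, α_1, …`, this
derivative is the cube of `D_β f` over the parallelepiped with sides `α_0, α_1, …`, so both
implications follow by induction on the degree. For the converse, `D_β f` is extended to all
of `𝓕∅` by `α ↦ f(α ∖ β)⁻¹ f(α ∪ β)` and evaluated on the parallelepiped with sides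
`α_0 ∖ β, β, α_1 ∖ β, …`.
-/

namespace HostKra

open Finset Function
open scoped commutatorElement

variable {G : Type*} [Group G]

structure IsPrefiltration (Gs : ℕ → Subgroup G) : Prop where
  antitone : Antitone Gs
  commutator_le : ∀ i j, ⁅Gs i, Gs j⁆ ≤ Gs (i + j)

lemma IsPrefiltration.shift {Gs : ℕ → Subgroup G} (hG : IsPrefiltration Gs) :
    IsPrefiltration fun i => Gs (i + 1) where
  antitone _ _ hij := hG.antitone (by omega)
  commutator_le i j := (hG.commutator_le _ _).trans (hG.antitone (by omega))

lemma cubeWeight_cons {k : ℕ} (t : Bool) (ω : Fin k → Bool) :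
    cubeWeight (Fin.cons t ω : Fin (k + 1) → Bool) = cubeWeight ω + t.toNat := by
  simp only [cubeWeight, card_filter, Fin.sum_univ_succ, Fin.cons_zero, Fin.cons_succ]
  cases t <;> simp [add_comm]

lemma cubeWeight_sup_le {k : ℕ} (ω τ : Fin k → Bool) :
    cubeWeight (ω ⊔ τ) ≤ cubeWeight ω + cubeWeight τ :=
  (card_le_card fun i => by simp).trans (card_union_le _ _)

/-- The element `g^{[ω]}` of `G^{{0,1}^k}`. -/
def upperFace {k : ℕ} (ω : Fin k → Bool) (g : G) : (Fin k → Bool) → G :=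
  fun σ => if ∀ i, ω i ≤ σ i then g else 1

section upperFace

variable {k : ℕ}

lemma upperFace_mem_HKGroup {Gs : ℕ → Subgroup G} {ω : Fin k → Bool} {g : G}
    (hg : g ∈ Gs (cubeWeight ω)) : upperFace ω g ∈ HKGroup k Gs :=
  Subgroup.subset_closure ⟨ω, g, hg, rfl⟩

lemma upperFace_inv (ω : Fin k → Bool) (g : G) : (upperFace ω g)⁻¹ = upperFace ω g⁻¹ := by
  funext σ; simp [upperFace, apply_ite Inv.inv]

lemma upperFace_cons_apply (t s : Bool) (ω σ : Fin k → Bool) (g : G) :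
    upperFace (Fin.cons t ω : Fin (k + 1) → Bool) g (Fin.cons s σ) =
      if t ≤ s then upperFace ω g σ else 1 := by
  simp only [upperFace, Fin.forall_fin_succ, Fin.cons_zero, Fin.cons_succ]
  by_cases h : t ≤ s <;> simp [h]

lemma upperFace_conj (ω τ : Fin k → Bool) (g h : G) :
    upperFace ω g * upperFace τ h * (upperFace ω g)⁻¹ =
      upperFace τ h * upperFace (ω ⊔ τ) ⁅h⁻¹, g⁆ := by
  funext σ
  have hsup : (∀ i, (ω ⊔ τ) i ≤ σ i) ↔ (∀ i, ω i ≤ σ i) ∧ ∀ i, τ i ≤ σ i :=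
    (sup_le_iff : ω ⊔ τ ≤ σ ↔ _)
  simp only [upperFace_inv, Pi.mul_apply, upperFace, hsup, commutatorElement_def]
  by_cases hω : ∀ i, ω i ≤ σ i <;> by_cases hτ : ∀ i, τ i ≤ σ i <;> simp [hω, hτ, mul_assoc]

end upperFace

lemma HKGroup.le_comap {k m : ℕ} {Gs Hs : ℕ → Subgroup G}
    (φ : ((Fin k → Bool) → G) →* ((Fin m → Bool) → G))
    (h : ∀ ω, ∀ g ∈ Gs (cubeWeight ω), φ (upperFace ω g) ∈ HKGroup m Hs) :
    HKGroup k Gs ≤ (HKGroup m Hs).comap φ :=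
  (Subgroup.closure_le _).2 <| by rintro _ ⟨ω, g, hg, rfl⟩; exact h ω g hg

section Prefiltration

variable {k : ℕ} {Gs : ℕ → Subgroup G}

lemma upperFace_conj_mem (hG : IsPrefiltration Gs) {ω : Fin k → Bool} {g : G}
    (hg : g ∈ Gs (cubeWeight ω)) {y : (Fin k → Bool) → G}
    (hy : y ∈ HKGroup k fun i => Gs (i + 1)) :
    upperFace ω g * y * (upperFace ω g)⁻¹ ∈ HKGroup k fun i => Gs (i + 1) := by
  have hgen : ∀ τ, ∀ h ∈ Gs (cubeWeight τ + 1),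
      upperFace ω g * upperFace τ h * (upperFace ω g)⁻¹ ∈ HKGroup k fun i => Gs (i + 1) := by
    intro τ h hh
    rw [upperFace_conj]
    refine mul_mem (upperFace_mem_HKGroup hh) (upperFace_mem_HKGroup ?_)
    have hcomm := hG.commutator_le _ _ (Subgroup.commutator_mem_commutator (inv_mem hh) hg)
    exact hG.antitone (by have := cubeWeight_sup_le ω τ; omega) hcomm
  have hconj := HKGroup.le_comap (Hs := fun i => Gs (i + 1))
    (MulAut.conj (upperFace ω g)).toMonoidHom (fun τ h hh => by simpa using hgen τ h hh) hy
  simpa using hconj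

lemma HKGroup_le_normalizer (hG : IsPrefiltration Gs) :
    HKGroup k Gs ≤ Subgroup.normalizer (HKGroup k fun i => Gs (i + 1) : Set _) := by
  refine (Subgroup.closure_le _).2 ?_
  rintro _ ⟨ω, g, hg, rfl⟩
  change upperFace ω g ∈ _
  refine Subgroup.mem_normalizer_iff.2 fun y => ⟨upperFace_conj_mem hG hg, fun hy => ?_⟩
  simpa only [← upperFace_inv, inv_inv, mul_assoc, inv_mul_cancel_left, inv_mul_cancel,
    mul_one] using upperFace_conj_mem hG (inv_mem hg) hy

end Prefiltration

section Extension

variable {k : ℕ}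

def lowerFace (c : (Fin (k + 1) → Bool) → G) : (Fin k → Bool) → G :=
  fun ω => c (Fin.cons false ω)

def cubeDeriv (c : (Fin (k + 1) → Bool) → G) : (Fin k → Bool) → G :=
  fun ω => (c (Fin.cons false ω))⁻¹ * c (Fin.cons true ω)

def constExtend : ((Fin k → Bool) → G) →* ((Fin (k + 1) → Bool) → G) where
  toFun c σ := c (Fin.tail σ)
  map_one' := rfl
  map_mul' _ _ := rfl

def upperExtend : ((Fin k → Bool) → G) →* ((Fin (k + 1) → Bool) → G) where
  toFun c σ := if σ 0 then c (Fin.tail σ) else 1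
  map_one' := by funext σ; simp
  map_mul' x y := by funext σ; by_cases h : σ 0 <;> simp [h]

lemma constExtend_upperFace (ω : Fin k → Bool) (g : G) :
    constExtend (upperFace ω g) = upperFace (Fin.cons false ω) g := by
  funext σ
  induction σ using Fin.consCases
  simp [constExtend, upperFace_cons_apply]

lemma upperExtend_upperFace (ω : Fin k → Bool) (g : G) :
    upperExtend (upperFace ω g) = upperFace (Fin.cons true ω) g := by
  funext σ
  induction σ using Fin.consCases with
  | cons s σ => cases s <;> simp [upperExtend, upperFace_cons_apply]

lemma constExtend_mul_upperExtend (c : (Fin (k + 1) → Bool) → G) :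
    constExtend (lowerFace c) * upperExtend (cubeDeriv c) = c := by
  funext σ
  induction σ using Fin.consCases with
  | cons s σ => cases s <;> simp [constExtend, upperExtend, lowerFace, cubeDeriv]

variable {Gs : ℕ → Subgroup G}

lemma constExtend_mem_HKGroup {c : (Fin k → Bool) → G} (hc : c ∈ HKGroup k Gs) :
    constExtend c ∈ HKGroup (k + 1) Gs :=
  HKGroup.le_comap constExtend (fun ω g hg => by
    rw [constExtend_upperFace]
    exact upperFace_mem_HKGroup (by simpa [cubeWeight_cons] using hg)) hc

lemma upperExtend_mem_HKGroup {c : (Fin k → Bool) → G}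
    (hc : c ∈ HKGroup k fun i => Gs (i + 1)) :
    upperExtend c ∈ HKGroup (k + 1) Gs :=
  HKGroup.le_comap upperExtend (fun ω g hg => by
    rw [upperExtend_upperFace]
    exact upperFace_mem_HKGroup (by simpa [cubeWeight_cons] using hg)) hc

lemma lowerFace_upperFace_cons (t : Bool) (ω : Fin k → Bool) (g : G) :
    lowerFace (upperFace (Fin.cons t ω) g) = if t then 1 else upperFace ω g := by
  funext σ; cases t <;> simp [lowerFace, upperFace_cons_apply]

lemma cubeDeriv_upperFace_cons (t : Bool) (ω : Fin k → Bool) (g : G) :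
    cubeDeriv (upperFace (Fin.cons t ω) g) = if t then upperFace ω g else 1 := by
  funext σ; cases t <;> simp [cubeDeriv, upperFace_cons_apply]

lemma cubeDeriv_one : cubeDeriv (1 : (Fin (k + 1) → Bool) → G) = 1 := by
  funext σ; simp [cubeDeriv]

lemma lowerFace_mul (x y : (Fin (k + 1) → Bool) → G) :
    lowerFace (x * y) = lowerFace x * lowerFace y := rfl

lemma cubeDeriv_mul (x y : (Fin (k + 1) → Bool) → G) :
    cubeDeriv (x * y) = (lowerFace y)⁻¹ * cubeDeriv x * lowerFace y * cubeDeriv y := by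
  funext σ; simp only [cubeDeriv, lowerFace, Pi.mul_apply, Pi.inv_apply]; group

lemma lowerFace_inv (x : (Fin (k + 1) → Bool) → G) : lowerFace x⁻¹ = (lowerFace x)⁻¹ := rfl

lemma cubeDeriv_inv (x : (Fin (k + 1) → Bool) → G) :
    cubeDeriv x⁻¹ = lowerFace x * (cubeDeriv x)⁻¹ * (lowerFace x)⁻¹ := by
  funext σ; simp only [cubeDeriv, lowerFace, Pi.mul_apply, Pi.inv_apply]; group

lemma mem_HKGroup_succ_of_lowerFace_of_cubeDeriv {c : (Fin (k + 1) → Bool) → G}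
    (h₀ : lowerFace c ∈ HKGroup k Gs) (h₁ : cubeDeriv c ∈ HKGroup k fun i => Gs (i + 1)) :
    c ∈ HKGroup (k + 1) Gs := by
  rw [← constExtend_mul_upperExtend c]
  exact mul_mem (constExtend_mem_HKGroup h₀) (upperExtend_mem_HKGroup h₁)

lemma lowerFace_mem_and_cubeDeriv_mem (hG : IsPrefiltration Gs)
    {c : (Fin (k + 1) → Bool) → G} (hc : c ∈ HKGroup (k + 1) Gs) :
    lowerFace c ∈ HKGroup k Gs ∧ cubeDeriv c ∈ HKGroup k fun i => Gs (i + 1) := by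
  have hN := HKGroup_le_normalizer (k := k) hG
  refine Subgroup.closure_induction (fun x hx => ?_)
    ⟨one_mem _, by rw [cubeDeriv_one]; exact one_mem _⟩ (fun x y _ _ hx hy => ?_)
    (fun x _ hx => ?_) hc
  · obtain ⟨ρ, g, hg, rfl⟩ := hx
    change lowerFace (upperFace ρ g) ∈ _ ∧ cubeDeriv (upperFace ρ g) ∈ _
    induction ρ using Fin.consCases with | cons t ω =>
    rw [cubeWeight_cons] at hg
    rw [lowerFace_upperFace_cons, cubeDeriv_upperFace_cons]
    cases t
    · exact ⟨upperFace_mem_HKGroup (by simpa using hg), one_mem _⟩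
    · exact ⟨one_mem _, upperFace_mem_HKGroup hg⟩
  · rw [lowerFace_mul, cubeDeriv_mul]
    refine ⟨mul_mem hx.1 hy.1, mul_mem ?_ hy.2⟩
    exact (Subgroup.mem_normalizer_iff''.1 (hN hy.1) _).1 hx.2
  · rw [lowerFace_inv, cubeDeriv_inv]
    exact ⟨inv_mem hx.1, (Subgroup.mem_normalizer_iff.1 (hN hx.1) _).1 (inv_mem hx.2)⟩

end Extension

lemma cubeWeight_fin_zero (ω : Fin 0 → Bool) : cubeWeight ω = 0 := by
  simp [cubeWeight]

lemma mem_HKGroup_zero_iff {Gs : ℕ → Subgroup G} {c : (Fin 0 → Bool) → G} :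
    c ∈ HKGroup 0 Gs ↔ ∀ σ, c σ ∈ Gs 0 := by
  refine ⟨fun hc σ => ?_, fun hc => ?_⟩
  · refine (Subgroup.closure_le ((Gs 0).comap (Pi.evalMonoidHom _ σ))).2 ?_ hc
    rintro _ ⟨ω, g, hg, rfl⟩
    rw [cubeWeight_fin_zero] at hg
    simp only [SetLike.mem_coe, Subgroup.mem_comap, Pi.evalMonoidHom_apply]
    split_ifs
    exacts [hg, one_mem _]
  · have hgen : upperFace finZeroElim (c finZeroElim) ∈ HKGroup 0 Gs :=
      upperFace_mem_HKGroup (by rw [cubeWeight_fin_zero]; exact hc finZeroElim)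
    convert hgen
    funext σ
    simp [upperFace, Subsingleton.elim σ finZeroElim]

def unionCube {k : ℕ} (a : Finset ℕ) (b : Fin k → Finset ℕ) (ω : Fin k → Bool) : Finset ℕ :=
  a ∪ (univ.filter fun i => ω i = true).biUnion b

@[simp]
lemma unionCube_fin_zero (a : Finset ℕ) (b : Fin 0 → Finset ℕ) (ω : Fin 0 → Bool) :
    unionCube a b ω = a := by
  simp [unionCube]

section unionCube

variable {k : ℕ} {a β : Finset ℕ} {b : Fin k → Finset ℕ} {ω : Fin k → Bool}

lemma unionCube_cons_false :
    unionCube a (Fin.cons β b) (Fin.cons false ω) = unionCube a b ω := by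
  ext x; simp [unionCube, Fin.exists_fin_succ]

lemma unionCube_cons_true :
    unionCube a (Fin.cons β b) (Fin.cons true ω) = unionCube a b ω ∪ β := by
  ext x
  simp only [unionCube, mem_union, mem_biUnion, mem_filter, mem_univ, true_and,
    Fin.exists_fin_succ, Fin.cons_zero, Fin.cons_succ, union_assoc]
  exact or_congr_right or_comm

lemma unionCube_sdiff : unionCube (a \ β) (fun i => b i \ β) ω = unionCube a b ω \ β := by
  ext x
  simp only [unionCube, mem_union, mem_sdiff, mem_biUnion, mem_filter, mem_univ, true_and]
  tauto

lemma disjoint_unionCube (ha : Disjoint a β) (hb : ∀ i, Disjoint (b i) β) :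
    Disjoint (unionCube a b ω) β := by
  simp only [unionCube, disjoint_union_left, disjoint_biUnion_left]
  exact ⟨ha, fun i _ => hb i⟩

end unionCube

def MapsUnionCubesTo (Gs : ℕ → Subgroup G) (f : Finset ℕ → G) : Prop :=
  ∀ (k : ℕ) (a : Finset ℕ) (b : Fin k → Finset ℕ), (∀ i, Disjoint a (b i)) →
    Pairwise (Disjoint on b) → (fun ω => f (unionCube a b ω)) ∈ HKGroup k Gs

lemma disjoint_cons_iff {k : ℕ} {a β : Finset ℕ} {b : Fin k → Finset ℕ} :
    ((∀ i, Disjoint a ((Fin.cons β b : Fin (k + 1) → Finset ℕ) i)) ∧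
      Pairwise (Disjoint on (Fin.cons β b : Fin (k + 1) → Finset ℕ))) ↔
      ((∀ i, Disjoint a (b i)) ∧ Pairwise (Disjoint on b)) ∧ Disjoint a β ∧
        ∀ i, Disjoint (b i) β := by
  simp only [Fin.forall_fin_succ, Fin.cons_zero, Fin.cons_succ,
    pairwise_fin_succ_iff_of_isSymm, Function.onFun, disjoint_comm (a := β)]
  tauto

theorem mapsUnionCubesTo_of_polyAux {n : ℕ} {Gs : ℕ → Subgroup G} {f : Finset ℕ → G}
    (hf : PolyAux n Gs f) : MapsUnionCubesTo Gs f := by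
  induction n generalizing Gs f with
  | zero =>
    intro k a b _ _
    simp only [hf.2]
    exact one_mem _
  | succ n ihn =>
    obtain ⟨hf₀, hD⟩ := hf
    intro k
    induction k with
    | zero => exact fun a b _ _ => mem_HKGroup_zero_iff.2 fun σ => by simpa using hf₀ a
    | succ k ihk =>
      intro a b hab hb
      induction b using Fin.consCases with | cons β b =>
      obtain ⟨⟨hab, hb⟩, haβ, hbβ⟩ := disjoint_cons_iff.1 ⟨hab, hb⟩
      refine mem_HKGroup_succ_of_lowerFace_of_cubeDeriv ?_ ?_
      · unfold lowerFace
        simpa only [unionCube_cons_false] using ihk a b hab hb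
      · unfold cubeDeriv
        simp only [unionCube_cons_true, unionCube_cons_false]
        rcases β.eq_empty_or_nonempty with rfl | hβ
        · simp only [union_empty, inv_mul_cancel]
          exact one_mem _
        obtain ⟨Df, hDf, hDf_eq⟩ := hD β hβ
        have hcube : (fun ω => Df (unionCube a b ω)) = _ :=
          funext fun ω => hDf_eq _ (disjoint_unionCube haβ hbβ)
        exact hcube ▸ ihn hDf k a b hab hb

lemma MapsUnionCubesTo.apply_mem {Gs : ℕ → Subgroup G} {f : Finset ℕ → G}
    (hf : MapsUnionCubesTo Gs f) (α : Finset ℕ) : f α ∈ Gs 0 := by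
  simpa using mem_HKGroup_zero_iff.1 (hf 0 α finZeroElim finZeroElim nofun) finZeroElim

theorem polyAux_of_mapsUnionCubesTo {n : ℕ} {Gs : ℕ → Subgroup G} {f : Finset ℕ → G}
    (hG : IsPrefiltration Gs) (hn : Gs n = ⊥) (hf : MapsUnionCubesTo Gs f) :
    PolyAux n Gs f := by
  induction n generalizing Gs f with
  | zero => exact ⟨hn, fun α => by simpa [hn] using hf.apply_mem α⟩
  | succ n ihn =>
    refine ⟨hf.apply_mem, fun β _ => ⟨fun α => (f (α \ β))⁻¹ * f (α ∪ β), ihn hG.shift hn ?_,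
      fun α hα => by simp only [sdiff_eq_self_of_disjoint hα]⟩⟩
    intro k a b hab hb
    have hdisj := disjoint_cons_iff (a := a \ β) (β := β) (b := fun i => b i \ β) |>.2
      ⟨⟨fun i => (hab i).mono sdiff_subset sdiff_subset,
        fun i j hij => (hb hij).mono sdiff_subset sdiff_subset⟩, sdiff_disjoint,
        fun _ => sdiff_disjoint⟩
    have hderiv := (lowerFace_mem_and_cubeDeriv_mem hG (hf _ _ _ hdisj.1 hdisj.2)).2
    unfold cubeDeriv at hderiv
    simpa only [unionCube_cons_false, unionCube_cons_true, unionCube_sdiff,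
      sdiff_union_self_eq_union] using hderiv

end HostKra

variable {E : Type*} [NormedAddCommGroup E] [NormedSpace ℝ E] [FiniteDimensional ℝ E]
  {G : Type*} [TopologicalSpace G] [ChartedSpace E G] [Group G] [IsTopologicalGroup G]
  [LieGroup (modelWithCornersSelf ℝ E) (⊤ : ℕ∞) G] [Group.IsNilpotent G]

theorem statement5_general
    (d : ℕ) (Gs : ℕ → Subgroup G)
    (hanti : Antitone Gs)
    (hcomm : ∀ i j, ⁅Gs i, Gs j⁆ ≤ Gs (i + j))
    (hfil0 : Gs 0 = ⊤) (hlen : Gs (d + 1) = ⊥)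
    (f : Finset ℕ → G) :
    IsPolySeq Gs f ↔
      ∀ k : ℕ, 1 ≤ k → ∀ A : (Fin k → Bool) → Finset ℕ, IsParallelepiped k A →
        (fun ω => f (A ω)) ∈ HKGroup k Gs := by
  refine ⟨fun ⟨n, hf⟩ k _ A ⟨a, b, hab, hb, hA⟩ => ?_, fun h => ⟨d + 1, ?_⟩⟩
  · obtain rfl : A = HostKra.unionCube a b := funext hA
    exact HostKra.mapsUnionCubesTo_of_polyAux hf k a b hab hb
  · refine HostKra.polyAux_of_mapsUnionCubesTo ⟨hanti, hcomm⟩ hlen fun k a b hab hb => ?_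
    cases k with
    | zero => exact HostKra.mem_HKGroup_zero_iff.2 fun _ => hfil0 ▸ Subgroup.mem_top _
    | succ k => exact h (k + 1) k.succ_pos _ ⟨a, b, hab, hb, fun _ => rfl⟩

/-- Let `G_•` be a `Γ`-rational filtration of length `d` on a nilpotent
finite-dimensional real Lie group `G`, with `Γ` discrete cocompact. A map `f : 𝓕∅ → G`
is polynomial with respect to `G_•` iff for every `k ≥ 1`, `f` maps every parallelepiped
`(α_ω)_{ω ∈ {0,1}^k}` into the Host–Kra cube group `HK^k(G_•)`. -/
theorem statement5
    (d : ℕ) (Gs : ℕ → Subgroup G)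
    (hanti : Antitone Gs) (hclosed : ∀ i, IsClosed (Gs i : Set G))
    (hcomm : ∀ i j, ⁅Gs i, Gs j⁆ ≤ Gs (i + j))
    (hfil0 : Gs 0 = ⊤) (hfil1 : Gs 1 = ⊤) (hlen : Gs (d + 1) = ⊥)
    (Γ : Subgroup G) [DiscreteTopology Γ] (hcocompact : CompactSpace (G ⧸ Γ))
    (hrat : ∀ i, CompactSpace (↥(Gs i) ⧸ Γ.subgroupOf (Gs i)))
    (f : Finset ℕ → G) :
    IsPolySeq Gs f ↔
      ∀ k : ℕ, 1 ≤ k → ∀ A : (Fin k → Bool) → Finset ℕ, IsParallelepiped k A →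
        (fun ω => f (A ω)) ∈ HKGroup k Gs :=
  statement5_general d Gs hanti hcomm hfil0 hlen f
end

section
/- Let G_• be a filtration of length d on a nilpotent finite-dimensional real Lie group G, and let Γ ≤ G be a discrete subgroup with G/Γ compact such that G_• is Γ-rational. Let k ≥ 1 and let (ḡ_ω)_{ω ∈ {0,1}^k \ {1^k}} be a family of points of G/Γ such that for every codimension-one face F_i = {ω ∈ {0,1}^k : ω_i = 0} (i = 1,…,k), the restricted cube (ḡ_ω)_{ω ∈ F_i}, identified with a {0,1}^{k−1}-indexed cube, lies in the image of HK^{k−1}(G_•) in (G/Γ)^{{0,1}^{k−1}}. Then there exists ḡ_{1^k} ∈ G/Γ such that the completed cube (ḡ_ω)_{ω ∈ {0,1}^k} lies in the image of HK^k(G_•) in (G/Γ)^{{0,1}^k}. -/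
/-!
Induction on the dimension. Lift the face `ω_last = 0` to `c ∈ HK^{k-1}(G_•)` and translate the
cube by the inverse of `c` extended constantly in the last coordinate; the translated cube is
trivial on that face. Because `[G_i, G_j] ⊆ G_{i+j}`, `HK^{k-1}(G_•)` normalises
`HK^{k-1}(G_{•+1})`, so every element of `HK^k(G_•)` is `d` extended constantly in the last
coordinate times some `u ∈ HK^{k-1}(G_{•+1})` placed on the face `ω_last = 1`, with
`d ∈ HK^{k-1}(G_•)`. For a lift of a face `ω_j = 0` of the translated cube, triviality on the
lower half forces `d` to take values in `Γ`, so `d u d⁻¹` lifts the upper half modulo `Γ`. Hence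
the face `ω_last = 1` of the translated cube is a partial cube for `G_{•+1}` whose faces lift,
and the induction hypothesis completes it.
-/

namespace Fin

lemma forall_le_iff_init_and_last {α : Type*} [LE α] {n : ℕ} {ω σ : Fin (n + 1) → α} :
    (∀ i, ω i ≤ σ i) ↔ (∀ i, Fin.init ω i ≤ Fin.init σ i) ∧ ω (Fin.last n) ≤ σ (Fin.last n) :=
  forall_fin_succ'

lemma insertNth_castSucc_snoc {α : Type*} {n : ℕ} (j : Fin (n + 1)) (x : α)
    (ρ : Fin n → α) (b : α) :
    (j.castSucc.insertNth x (Fin.snoc ρ b) : Fin (n + 2) → α) =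
      Fin.snoc (j.insertNth x ρ) b := by
  funext l
  induction l using Fin.lastCases with
  | last =>
    have : j.castSucc.succAbove (Fin.last n) = Fin.last (n + 1) := by
      rw [Fin.succAbove_of_le_castSucc _ _ (Fin.castSucc_le_castSucc_iff.2 (Fin.le_last j)),
        Fin.succ_last]
    rw [Fin.snoc_last, ← this, Fin.insertNth_apply_succAbove, Fin.snoc_last]
  | cast l =>
    rw [Fin.snoc_castSucc]
    induction l using j.succAboveCases with
    | x => simp
    | p i =>
      rw [← Fin.castSucc_succAbove_castSucc, Fin.insertNth_apply_succAbove, Fin.snoc_castSucc,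
        Fin.insertNth_apply_succAbove]

end Fin

section CubeWeight

variable {k : ℕ}

lemma cubeWeight_sup_le (ρ τ : Fin k → Bool) :
    cubeWeight (ρ ⊔ τ) ≤ cubeWeight ρ + cubeWeight τ := by
  refine (Finset.card_le_card fun i => ?_).trans (Finset.card_union_le _ _)
  simp

lemma cubeWeight_snoc (ω : Fin k → Bool) (b : Bool) :
    cubeWeight (Fin.snoc ω b : Fin (k + 1) → Bool) = cubeWeight ω + b.toNat := by
  unfold cubeWeight
  rw [Finset.card_filter, Finset.card_filter, Fin.sum_univ_castSucc]
  cases b <;> simp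

lemma cubeWeight_removeNth_le (i : Fin (k + 1)) (ω : Fin (k + 1) → Bool) :
    cubeWeight (i.removeNth ω) ≤ cubeWeight ω :=
  Finset.card_le_card_of_injOn i.succAbove (fun l hl => by
    simp only [Finset.coe_filter, Finset.mem_univ, true_and, Set.mem_ofPred_eq] at hl ⊢; exact hl)
    Fin.succAbove_right_injective.injOn

end CubeWeight

namespace HKGroup

variable {G : Type*} [Group G] {k : ℕ} {Gs : ℕ → Subgroup G}

def upperFace (ω : Fin k → Bool) (g : G) : (Fin k → Bool) → G :=
  fun σ => if ∀ i, ω i ≤ σ i then g else 1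

lemma upperFace_mem {ω : Fin k → Bool} {g : G} (hg : g ∈ Gs (cubeWeight ω)) :
    upperFace ω g ∈ HKGroup k Gs :=
  Subgroup.subset_closure ⟨ω, g, hg, rfl⟩

lemma le_of_forall_upperFace_mem {K : Subgroup ((Fin k → Bool) → G)}
    (h : ∀ ω g, g ∈ Gs (cubeWeight ω) → upperFace ω g ∈ K) : HKGroup k Gs ≤ K :=
  (Subgroup.closure_le K).2 <| by rintro _ ⟨ω, g, hg, rfl⟩; exact h ω g hg

lemma map_mem_of_forall_upperFace {H : Type*} [Group H] (φ : ((Fin k → Bool) → G) →* H)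
    {K : Subgroup H} (h : ∀ ω g, g ∈ Gs (cubeWeight ω) → φ (upperFace ω g) ∈ K)
    {c : (Fin k → Bool) → G} (hc : c ∈ HKGroup k Gs) : φ c ∈ K :=
  le_of_forall_upperFace_mem (K := K.comap φ) h hc

lemma upperFace_inv (ω : Fin k → Bool) (g : G) : (upperFace ω g)⁻¹ = upperFace ω g⁻¹ := by
  funext σ
  by_cases h : ∀ i, ω i ≤ σ i <;> simp [upperFace, h]

lemma upperFace_conj (τ ρ : Fin k → Bool) (h g : G) :
    upperFace τ h * upperFace ρ g * (upperFace τ h)⁻¹ =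
      upperFace (ρ ⊔ τ) (h * g * h⁻¹ * g⁻¹) * upperFace ρ g := by
  funext σ
  have hsup : (∀ i, (ρ ⊔ τ) i ≤ σ i) ↔ (∀ i, ρ i ≤ σ i) ∧ ∀ i, τ i ≤ σ i := by
    simp only [Pi.sup_apply, sup_le_iff, forall_and]
  simp only [upperFace, Pi.mul_apply, Pi.inv_apply, hsup]
  by_cases hτ : ∀ i, τ i ≤ σ i <;> by_cases hρ : ∀ i, ρ i ≤ σ i <;> simp [hτ, hρ]

lemma upperFace_conj_mem (hanti : Antitone Gs) (hcomm : ∀ i j, ⁅Gs i, Gs j⁆ ≤ Gs (i + j))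
    {τ : Fin k → Bool} {h : G} (hh : h ∈ Gs (cubeWeight τ)) {u : (Fin k → Bool) → G}
    (hu : u ∈ HKGroup k fun n => Gs (n + 1)) :
    upperFace τ h * u * (upperFace τ h)⁻¹ ∈ HKGroup k fun n => Gs (n + 1) := by
  refine map_mem_of_forall_upperFace (MulAut.conj (upperFace τ h)).toMonoidHom
    (fun ρ g hg => ?_) hu
  rw [MulEquiv.coe_toMonoidHom, MulAut.conj_apply, upperFace_conj]
  refine mul_mem (upperFace_mem (hanti ?_ (hcomm _ _ (Subgroup.commutator_mem_commutator hh hg))))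
    (upperFace_mem hg)
  have := cubeWeight_sup_le ρ τ
  omega

lemma le_normalizer_shift (hanti : Antitone Gs) (hcomm : ∀ i j, ⁅Gs i, Gs j⁆ ≤ Gs (i + j)) :
    HKGroup k Gs ≤
      Subgroup.normalizer (HKGroup k fun n => Gs (n + 1) : Set ((Fin k → Bool) → G)) :=
  le_of_forall_upperFace_mem fun τ h hh => Subgroup.mem_normalizer_iff.2 fun u =>
    ⟨upperFace_conj_mem hanti hcomm hh, fun hu => by
      simpa [← upperFace_inv, mul_assoc] using upperFace_conj_mem hanti hcomm (inv_mem hh) hu⟩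

variable (k) in
def extendLast : ((Fin k → Bool) → G) →* ((Fin (k + 1) → Bool) → G) :=
  MonoidHom.mk' (fun c σ => c (Fin.init σ)) fun _ _ => rfl

variable (k) in
def embedUpperLast : ((Fin k → Bool) → G) →* ((Fin (k + 1) → Bool) → G) :=
  MonoidHom.mk' (fun u σ => if σ (Fin.last k) then u (Fin.init σ) else 1) fun u v => by
    funext σ
    by_cases h : σ (Fin.last k) <;> simp [h]

def restrictFace (i : Fin (k + 1)) (b : Bool) :
    ((Fin (k + 1) → Bool) → G) →* ((Fin k → Bool) → G) :=
  MonoidHom.mk' (fun c τ => c (i.insertNth b τ)) fun _ _ => rfl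

@[simp] lemma extendLast_apply (c : (Fin k → Bool) → G) (σ : Fin (k + 1) → Bool) :
    extendLast k c σ = c (Fin.init σ) := rfl

@[simp] lemma restrictFace_apply (i : Fin (k + 1)) (b : Bool) (c : (Fin (k + 1) → Bool) → G)
    (τ : Fin k → Bool) : restrictFace i b c τ = c (i.insertNth b τ) := rfl

lemma embedUpperLast_apply (u : (Fin k → Bool) → G) (σ : Fin (k + 1) → Bool) :
    embedUpperLast k u σ = if σ (Fin.last k) then u (Fin.init σ) else 1 := rfl

@[simp] lemma embedUpperLast_snoc (u : (Fin k → Bool) → G) (τ : Fin k → Bool) (b : Bool) :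
    embedUpperLast k u (Fin.snoc τ b) = if b then u τ else 1 := by
  simp [embedUpperLast_apply]

lemma extendLast_upperFace (ω : Fin k → Bool) (g : G) :
    extendLast k (upperFace ω g) = upperFace (Fin.snoc ω false) g := by
  funext σ
  simp [upperFace, Fin.forall_le_iff_init_and_last (ω := Fin.snoc ω false)]

lemma embedUpperLast_upperFace (ω : Fin k → Bool) (g : G) :
    embedUpperLast k (upperFace ω g) = upperFace (Fin.snoc ω true) g := by
  funext σ
  by_cases h : σ (Fin.last k) <;>
    simp [upperFace, embedUpperLast_apply, Fin.forall_le_iff_init_and_last (ω := Fin.snoc ω true),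
      h]

lemma restrictFace_upperFace (i : Fin (k + 1)) (b : Bool) (ω : Fin (k + 1) → Bool) (g : G) :
    restrictFace i b (upperFace ω g) = if ω i ≤ b then upperFace (i.removeNth ω) g else 1 := by
  funext τ
  by_cases hb : ω i ≤ b <;> simp [upperFace, Fin.forall_iff_succAbove i, Fin.removeNth, hb]
  exact if_congr Iff.rfl rfl rfl

lemma extendLast_mem {c : (Fin k → Bool) → G} (hc : c ∈ HKGroup k Gs) :
    extendLast k c ∈ HKGroup (k + 1) Gs :=
  map_mem_of_forall_upperFace _ (fun ω g hg => by
    rw [extendLast_upperFace]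
    exact upperFace_mem (by simpa [cubeWeight_snoc] using hg)) hc

lemma embedUpperLast_mem {u : (Fin k → Bool) → G} (hu : u ∈ HKGroup k fun n => Gs (n + 1)) :
    embedUpperLast k u ∈ HKGroup (k + 1) Gs :=
  map_mem_of_forall_upperFace _ (fun ω g hg => by
    rw [embedUpperLast_upperFace]
    exact upperFace_mem (by simpa [cubeWeight_snoc] using hg)) hu

lemma restrictFace_mem (hanti : Antitone Gs) (i : Fin (k + 1)) (b : Bool)
    {c : (Fin (k + 1) → Bool) → G} (hc : c ∈ HKGroup (k + 1) Gs) :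
    restrictFace i b c ∈ HKGroup k Gs :=
  map_mem_of_forall_upperFace _ (fun ω g hg => by
    rw [restrictFace_upperFace]
    split_ifs
    · exact upperFace_mem (hanti (cubeWeight_removeNth_le i ω) hg)
    · exact one_mem _) hc

lemma extendLast_conj_embedUpperLast (d u : (Fin k → Bool) → G) :
    extendLast k d * embedUpperLast k u * (extendLast k d)⁻¹ = embedUpperLast k (d * u * d⁻¹) := by
  funext σ
  by_cases h : σ (Fin.last k) <;> simp [embedUpperLast_apply, h]

lemma exists_extendLast_mul_embedUpperLast_eq (hanti : Antitone Gs)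
    (hcomm : ∀ i j, ⁅Gs i, Gs j⁆ ≤ Gs (i + j)) {c : (Fin (k + 1) → Bool) → G}
    (hc : c ∈ HKGroup (k + 1) Gs) :
    ∃ d ∈ HKGroup k Gs, ∃ u ∈ HKGroup k (fun n => Gs (n + 1)),
      extendLast k d * embedUpperLast k u = c := by
  have hnorm := le_normalizer_shift (k := k) hanti hcomm
  have hLE : (HKGroup k Gs).map (extendLast k) ≤
      Subgroup.normalizer (((HKGroup k fun n => Gs (n + 1)).map (embedUpperLast k) :
        Set ((Fin (k + 1) → Bool) → G))) := by
    rintro _ ⟨d, hd, rfl⟩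
    refine Subgroup.mem_normalizer_iff.2 fun v => ⟨?_, ?_⟩
    · rintro ⟨u, hu, rfl⟩
      exact ⟨d * u * d⁻¹, (Subgroup.mem_normalizer_iff.1 (hnorm hd) u).1 hu,
        (extendLast_conj_embedUpperLast d u).symm⟩
    · rintro ⟨u, hu, hv⟩
      refine ⟨d⁻¹ * u * d, (Subgroup.mem_normalizer_iff''.1 (hnorm hd) u).1 hu, ?_⟩
      have := extendLast_conj_embedUpperLast d⁻¹ u
      rw [inv_inv, map_inv, hv] at this
      simpa [mul_assoc] using this.symm
  have hsup : c ∈ (HKGroup k Gs).map (extendLast k) ⊔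
      (HKGroup k fun n => Gs (n + 1)).map (embedUpperLast k) := by
    refine le_of_forall_upperFace_mem (fun ω g hg => ?_) hc
    induction ω using Fin.snocCases with
    | snoc ω b =>
      cases b
      · exact Subgroup.mem_sup_left ⟨upperFace ω g,
          upperFace_mem (by simpa [cubeWeight_snoc] using hg), extendLast_upperFace ω g⟩
      · exact Subgroup.mem_sup_right ⟨upperFace ω g,
          upperFace_mem (by simpa [cubeWeight_snoc] using hg), embedUpperLast_upperFace ω g⟩
  rw [← SetLike.mem_coe, Subgroup.coe_mul_of_left_le_normalizer_right _ _ hLE] at hsup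
  obtain ⟨_, ⟨d, hd, rfl⟩, _, ⟨u, hu, rfl⟩, rfl⟩ := hsup
  exact ⟨d, hd, u, hu, rfl⟩

end HKGroup

section Quotient

open HKGroup

variable {G : Type*} [Group G] {k : ℕ} {Gs : ℕ → Subgroup G} {Γ : Subgroup G}

def LiftsToHKOn (Gs : ℕ → Subgroup G) (Γ : Subgroup G) (S : Set (Fin k → Bool))
    (f : (Fin k → Bool) → G ⧸ Γ) : Prop :=
  ∃ c ∈ HKGroup k Gs, ∀ ω ∈ S, f ω = QuotientGroup.mk (c ω)

lemma LiftsToHKOn.smul {S : Set (Fin k → Bool)} {f : (Fin k → Bool) → G ⧸ Γ}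
    {c : (Fin k → Bool) → G} (hc : c ∈ HKGroup k Gs) (hf : LiftsToHKOn Gs Γ S f) :
    LiftsToHKOn Gs Γ S fun ω => c ω • f ω := by
  obtain ⟨c', hc', hf⟩ := hf
  exact ⟨c * c', mul_mem hc hc', fun ω hω => congrArg (c ω • ·) (hf ω hω)⟩

lemma LiftsToHKOn.upperLast_of_lowerLast_eq_one (hanti : Antitone Gs)
    (hcomm : ∀ i j, ⁅Gs i, Gs j⁆ ≤ Gs (i + j)) {g : (Fin (k + 1) → Bool) → G ⧸ Γ}
    (hg : LiftsToHKOn Gs Γ Set.univ g) (hlow : ∀ τ, g (Fin.snoc τ false) = QuotientGroup.mk 1) :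
    LiftsToHKOn (fun n => Gs (n + 1)) Γ Set.univ fun τ => g (Fin.snoc τ true) := by
  obtain ⟨_, hc, hgc⟩ := hg
  obtain ⟨d, hd, u, hu, rfl⟩ := exists_extendLast_mul_embedUpperLast_eq hanti hcomm hc
  have hdΓ : ∀ τ, d τ ∈ Γ := fun τ => by
    simpa using QuotientGroup.eq.1 ((hlow τ).symm.trans (hgc _ trivial))
  refine ⟨d * u * d⁻¹,
    (Subgroup.mem_normalizer_iff.1 (le_normalizer_shift hanti hcomm hd) u).1 hu, fun τ _ => ?_⟩
  dsimp only
  rw [hgc _ trivial]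
  simp only [Pi.mul_apply, Pi.inv_apply, extendLast_apply, embedUpperLast_snoc, Fin.init_snoc,
    if_true]
  exact (QuotientGroup.mk_mul_of_mem _ (inv_mem (hdΓ τ))).symm

lemma LiftsToHKOn.compl_top_of_lowerLast {f : (Fin (k + 1) → Bool) → G ⧸ Γ}
    {c : (Fin k → Bool) → G} (hc : c ∈ HKGroup k Gs)
    (hlow : ∀ τ, f (Fin.snoc τ false) = QuotientGroup.mk (c τ))
    (hup : LiftsToHKOn (fun n => Gs (n + 1)) Γ {⊤}ᶜ fun τ => (c τ)⁻¹ • f (Fin.snoc τ true)) :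
    LiftsToHKOn Gs Γ {⊤}ᶜ f := by
  obtain ⟨w, hw, hfw⟩ := hup
  refine ⟨extendLast k c * embedUpperLast k w,
    mul_mem (extendLast_mem hc) (embedUpperLast_mem hw), fun ω hω => ?_⟩
  induction ω using Fin.snocCases with
  | snoc τ b =>
    cases b
    · simpa using hlow τ
    · have hτ : τ ≠ ⊤ := by
        rintro rfl
        refine hω (funext fun i => ?_)
        induction i using Fin.lastCases <;> simp
      simp only [Pi.mul_apply, extendLast_apply, embedUpperLast_snoc, Fin.init_snoc, if_true]
      show _ = c τ • (QuotientGroup.mk (w τ) : G ⧸ Γ)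
      rw [← hfw τ hτ, smul_inv_smul]

lemma LiftsToHKOn.upperLast_face (hanti : Antitone Gs)
    (hcomm : ∀ i j, ⁅Gs i, Gs j⁆ ≤ Gs (i + j)) {f : (Fin (k + 2) → Bool) → G ⧸ Γ}
    {c : (Fin (k + 1) → Bool) → G} (hc : c ∈ HKGroup (k + 1) Gs)
    (hlow : ∀ τ, f (Fin.snoc τ false) = QuotientGroup.mk (c τ)) (j : Fin (k + 1))
    (hface : LiftsToHKOn Gs Γ Set.univ fun τ => f (j.castSucc.insertNth false τ)) :
    LiftsToHKOn (fun n => Gs (n + 1)) Γ Set.univ fun ρ =>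
      (c (j.insertNth false ρ))⁻¹ • f (Fin.snoc (j.insertNth false ρ) true) := by
  have hlift := hface.smul
    (inv_mem (restrictFace_mem hanti j.castSucc false (extendLast_mem hc)))
  have := hlift.upperLast_of_lowerLast_eq_one hanti hcomm fun ρ => by
    simp [Fin.insertNth_castSucc_snoc, hlow]
  simpa [Fin.insertNth_castSucc_snoc] using this

theorem LiftsToHKOn.compl_top_of_faces {m : ℕ} (hanti : Antitone Gs)
    (hcomm : ∀ i j, ⁅Gs i, Gs j⁆ ≤ Gs (i + j)) {f : (Fin (m + 1) → Bool) → G ⧸ Γ}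
    (hface : ∀ i : Fin (m + 1), LiftsToHKOn Gs Γ Set.univ fun τ => f (i.insertNth false τ)) :
    LiftsToHKOn Gs Γ {⊤}ᶜ f := by
  induction m generalizing Gs with
  | zero =>
    obtain ⟨c, hc, hlow⟩ := hface (Fin.last 0)
    simp only [Fin.insertNth_last', Set.mem_univ, true_implies] at hlow
    exact compl_top_of_lowerLast hc hlow
      ⟨1, one_mem _, fun τ hτ => (hτ (Subsingleton.elim _ _)).elim⟩
  | succ m ih =>
    obtain ⟨c, hc, hlow⟩ := hface (Fin.last _)
    simp only [Fin.insertNth_last', Set.mem_univ, true_implies] at hlow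
    exact compl_top_of_lowerLast hc hlow <|
      ih (fun i j hij => hanti (by omega)) (fun i j => (hcomm _ _).trans (hanti (by omega)))
        fun j => upperLast_face hanti hcomm hc hlow j (hface j.castSucc)

end Quotient

variable {E : Type*} [NormedAddCommGroup E] [NormedSpace ℝ E] [FiniteDimensional ℝ E]
  {G : Type*} [TopologicalSpace G] [ChartedSpace E G] [Group G] [IsTopologicalGroup G]
  [LieGroup (modelWithCornersSelf ℝ E) (⊤ : ℕ∞) G] [Group.IsNilpotent G]

theorem statement7_general
    (Gs : ℕ → Subgroup G)
    (hanti : Antitone Gs)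
    (hcomm : ∀ i j, ⁅Gs i, Gs j⁆ ≤ Gs (i + j))
    (Γ : Subgroup G)
    (m : ℕ) (gbar : (Fin (m + 1) → Bool) → G ⧸ Γ)
    (hface : ∀ i : Fin (m + 1), ∃ c ∈ HKGroup m Gs,
      ∀ τ : Fin m → Bool, gbar (i.insertNth false τ) = QuotientGroup.mk (c τ)) :
    ∃ gtop : G ⧸ Γ, ∃ c ∈ HKGroup (m + 1) Gs,
      ∀ ω : Fin (m + 1) → Bool,
        Function.update gbar (fun _ => true) gtop ω = QuotientGroup.mk (c ω) := by
  obtain ⟨c, hc, hgc⟩ := LiftsToHKOn.compl_top_of_faces hanti hcomm fun i =>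
    (hface i).imp fun _ ⟨hc, h⟩ => ⟨hc, fun τ _ => h τ⟩
  refine ⟨QuotientGroup.mk (c ⊤), c, hc, fun ω => ?_⟩
  by_cases hω : ω = fun _ => true
  · rw [hω, Function.update_self]
    rfl
  · rw [Function.update_of_ne hω]
    exact hgc ω hω

/-- **corner completion.** Let `G_•` be a `Γ`-rational filtration of length
`d` as above, and let `k = m + 1 ≥ 1`. Suppose `(ḡ_ω)_{ω ≠ 1^k}` is a partial cube in
`G/Γ` whose restriction to each codimension-one face `{ω : ω_i = 0}` (identified with
`{0,1}^{k-1}` via `Fin.insertNth`) lies in the image of `HK^{k-1}(G_•)` in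
`(G/Γ)^{{0,1}^{k-1}}`. Then there is a value `ḡ_{1^k}` completing it to a cube lying in
the image of `HK^k(G_•)` in `(G/Γ)^{{0,1}^k}`. -/
theorem statement7
    (d : ℕ) (Gs : ℕ → Subgroup G)
    (hanti : Antitone Gs) (hclosed : ∀ i, IsClosed (Gs i : Set G))
    (hcomm : ∀ i j, ⁅Gs i, Gs j⁆ ≤ Gs (i + j))
    (hfil0 : Gs 0 = ⊤) (hfil1 : Gs 1 = ⊤) (hlen : Gs (d + 1) = ⊥)
    (Γ : Subgroup G) [DiscreteTopology Γ] (hcocompact : CompactSpace (G ⧸ Γ))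
    (hrat : ∀ i, CompactSpace (↥(Gs i) ⧸ Γ.subgroupOf (Gs i)))
    (m : ℕ) (gbar : (Fin (m + 1) → Bool) → G ⧸ Γ)
    (hface : ∀ i : Fin (m + 1), ∃ c ∈ HKGroup m Gs,
      ∀ τ : Fin m → Bool, gbar (i.insertNth false τ) = QuotientGroup.mk (c τ)) :
    ∃ gtop : G ⧸ Γ, ∃ c ∈ HKGroup (m + 1) Gs,
      ∀ ω : Fin (m + 1) → Bool,
        Function.update gbar (fun _ => true) gtop ω = QuotientGroup.mk (c ω) :=
  statement7_general Gs hanti hcomm Γ m gbar hface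
end
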